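/- arXiv:1803.00481 — 2 statements merged into one kernel-verified Lean document; each statement's English description precedes it below -/
import Mathlib

section
/- Under the standing assumptions, let i, j be nodes and suppose k > max( (w_i + v_j − γ_{i,j})/λ* + (n − 1), (w_i − α_i + v_j − β_j)/λ* + 2(n − 1) ), where the term involving γ_{i,j} is omitted from the maximum if γ_{i,j} = −∞. Then Γ(k)_{i,j} = Γ(k)_{i,1} ⊗ Γ(k)_{1,j} = Γ(k)_{i,1} + Γ(k)_{1,j}. -/
/-
Common framework for "A bound for the rank-one transient of inhomogeneous matrix
products in special case" (Kennedy-Cochran-Patrick, Sergeev, Berežný).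

We work over the max-plus semiring, modelled inside `EReal` (so `⊥ = -∞` is the
max-plus zero and ordinary addition is the max-plus multiplication).  Matrices are
functions `Fin m → Fin m → EReal`.  The distinguished node "1" of the paper is the
node `0 : Fin (n+2)` (so that `n + 2 ≥ 2` plays the role of the paper's `n ≥ 2`).

A walk is a nonempty list of nodes.  Walks on the trellis digraph of the product
`A 1 ⊗ ⋯ ⊗ A k` additionally record the level at which they start: the arc from the
`(l-1)`-st to the `l`-th node of a walk starting at level `s` has weight given by the
matrix `A (s + l)`.
-/

open scoped Classical

noncomputable section

namespace MaxPlusTransient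

variable {m : ℕ}

/-- Weight of a walk on the trellis digraph, starting at level `s`. -/
def tw (M : ℕ → Fin m → Fin m → EReal) : ℕ → List (Fin m) → EReal
  | _, [] => 0
  | _, [_] => 0
  | s, a :: b :: t => M (s + 1) a b + tw M (s + 1) (b :: t)

/-- Being a walk on the trellis digraph, starting at level `s` (all traversed arcs exist,
i.e. have weight `≠ -∞`); a walk is a nonempty list of nodes. -/
def twalk (M : ℕ → Fin m → Fin m → EReal) : ℕ → List (Fin m) → Prop
  | _, [] => False
  | _, [_] => True
  | s, a :: b :: t => M (s + 1) a b ≠ ⊥ ∧ twalk M (s + 1) (b :: t)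

/-- Weight of a walk on the digraph `D_A` of a single matrix `A`. -/
def wWeight (A : Fin m → Fin m → EReal) (W : List (Fin m)) : EReal :=
  tw (fun _ => A) 0 W

/-- Being a walk on the digraph `D_A` of a matrix `A`. -/
def isWalk (A : Fin m → Fin m → EReal) (W : List (Fin m)) : Prop :=
  twalk (fun _ => A) 0 W

/-- A path is a walk with no repeated nodes. -/
def isPath (A : Fin m → Fin m → EReal) (W : List (Fin m)) : Prop :=
  isWalk A W ∧ W.Nodup

/-- A cycle is a walk of length (number of arcs) at least one whose first and last
nodes coincide. -/
def isCycle (A : Fin m → Fin m → EReal) (W : List (Fin m)) : Prop :=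
  isWalk A W ∧ 2 ≤ W.length ∧ W.head? = W.getLast?

/-- A matrix is irreducible iff its digraph is strongly connected. -/
def irreducible (A : Fin m → Fin m → EReal) : Prop :=
  ∀ i j : Fin m, ∃ W, isWalk A W ∧ W.head? = some i ∧ W.getLast? = some j

/-- Geometric equivalence: the digraphs have the same arcs. -/
def geomEq (A B : Fin m → Fin m → EReal) : Prop :=
  ∀ i j, A i j = ⊥ ↔ B i j = ⊥

/-- Max-plus matrix product. -/
def mp (A B : Fin m → Fin m → EReal) : Fin m → Fin m → EReal :=
  fun i j => ⨆ s, A i s + B s j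

/-- `Gamma M k = M 1 ⊗ M 2 ⊗ ⋯ ⊗ M k` (max-plus product), with `Gamma M 0` the
max-plus identity matrix. -/
def Gamma (M : ℕ → Fin m → Fin m → EReal) : ℕ → Fin m → Fin m → EReal
  | 0 => fun i j => if i = j then 0 else ⊥
  | k + 1 => mp (Gamma M k) (M (k + 1))

/-- An initial walk from `i` to `one` on the trellis digraph of `M 1 ⊗ ⋯ ⊗ M k`:
it starts at node `i` at level `0`, ends at node `one` at some level `≤ k`, and the
only node of the walk equal to `one` is its final node. -/
def isInitialWalk (M : ℕ → Fin m → Fin m → EReal) (one : Fin m) (k : ℕ) (i : Fin m)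
    (W : List (Fin m)) : Prop :=
  twalk M 0 W ∧ W.length - 1 ≤ k ∧ W.head? = some i ∧ W.getLast? = some one ∧
    ∀ v ∈ W.dropLast, v ≠ one

/-- A final walk from `one` to `j` on the trellis digraph of `M 1 ⊗ ⋯ ⊗ M k`:
it starts at node `one` at some level `s`, ends at node `j` at level `k`, and the
only node of the walk equal to `one` is its first node. -/
def isFinalWalk (M : ℕ → Fin m → Fin m → EReal) (one : Fin m) (k : ℕ) (j : Fin m) (s : ℕ)
    (W : List (Fin m)) : Prop :=
  twalk M s W ∧ s + (W.length - 1) = k ∧ W.head? = some one ∧ W.getLast? = some j ∧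
    ∀ v ∈ W.tail, v ≠ one

/-- A full walk from `i` to `j` on the trellis digraph of `M 1 ⊗ ⋯ ⊗ M k`: it goes
from node `i` at level `0` to node `j` at level `k`. -/
def isFullWalk (M : ℕ → Fin m → Fin m → EReal) (k : ℕ) (i j : Fin m)
    (W : List (Fin m)) : Prop :=
  twalk M 0 W ∧ W.length = k + 1 ∧ W.head? = some i ∧ W.getLast? = some j

/-- `w_i*`: maximal weight of an initial walk from `i` to `one`. -/
def wStar (M : ℕ → Fin m → Fin m → EReal) (one : Fin m) (k : ℕ) (i : Fin m) : EReal :=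
  sSup {x : EReal | ∃ W, isInitialWalk M one k i W ∧ x = tw M 0 W}

/-- `v_j*`: maximal weight of a final walk from `one` to `j`. -/
def vStar (M : ℕ → Fin m → Fin m → EReal) (one : Fin m) (k : ℕ) (j : Fin m) : EReal :=
  sSup {x : EReal | ∃ s W, isFinalWalk M one k j s W ∧ x = tw M s W}

/-- `α_i`: maximal weight of a path on `D_A` from `i` to `one`. -/
def alphaE (A : Fin m → Fin m → EReal) (one : Fin m) (i : Fin m) : EReal :=
  sSup {x : EReal | ∃ W, isPath A W ∧ W.head? = some i ∧ W.getLast? = some one ∧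
    x = wWeight A W}

/-- `β_j`: maximal weight of a path on `D_A` from `one` to `j`. -/
def betaE (A : Fin m → Fin m → EReal) (one : Fin m) (j : Fin m) : EReal :=
  sSup {x : EReal | ∃ W, isPath A W ∧ W.head? = some one ∧ W.getLast? = some j ∧
    x = wWeight A W}

/-- `γ_{i,j}`: maximal weight of a path on `D_A` from `i` to `j` not passing through
`one` (`-∞` if no such path exists). -/
def gammaE (A : Fin m → Fin m → EReal) (one : Fin m) (i j : Fin m) : EReal :=
  sSup {x : EReal | ∃ W, isPath A W ∧ W.head? = some i ∧ W.getLast? = some j ∧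
    (∀ v ∈ W, v ≠ one) ∧ x = wWeight A W}

/-- The set of mean weights of cycles of `D_A` avoiding the node `one`. -/
def lamSet (A : Fin m → Fin m → EReal) (one : Fin m) : Set ℝ :=
  {x : ℝ | ∃ W, isCycle A W ∧ (∀ v ∈ W, v ≠ one) ∧
    ∃ r : ℝ, wWeight A W = (r : EReal) ∧ x = r / ((W.length : ℝ) - 1)}

/-- `λ*`: the supremum of the mean weights of cycles of `D_A` avoiding `one`. -/
def lamStar (A : Fin m → Fin m → EReal) (one : Fin m) : ℝ :=
  sSup (lamSet A one)

/-- `w_i`: maximal weight of a walk of length at most `k` from `i` to `one` on `D_A`. -/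
def wInf (A : Fin m → Fin m → EReal) (one : Fin m) (k : ℕ) (i : Fin m) : EReal :=
  sSup {x : EReal | ∃ W, isWalk A W ∧ W.length - 1 ≤ k ∧ W.head? = some i ∧
    W.getLast? = some one ∧ x = wWeight A W}

/-- `v_j`: maximal weight of a walk of length at most `k` from `one` to `j` on `D_A`. -/
def vInf (A : Fin m → Fin m → EReal) (one : Fin m) (k : ℕ) (j : Fin m) : EReal :=
  sSup {x : EReal | ∃ W, isWalk A W ∧ W.length - 1 ≤ k ∧ W.head? = some one ∧
    W.getLast? = some j ∧ x = wWeight A W}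

/-- The standing assumptions of the paper on the set `𝒳` and its entrywise boundaries
`Asup` (supremum) and `Ainf` (infimum):
matrices of `𝒳` have no `+∞` entries, `Asup`/`Ainf` are the entrywise sup/inf,
`Asup` has no `+∞` entries and `Ainf` has no `-∞` entries where matrices of `𝒳` are
finite; all matrices of `𝒳` and also `Ainf` are irreducible and pairwise geometrically
equivalent; every matrix of `𝒳` and also `Asup` has `(one, one)` entry `0` and all its
cycles other than (repetitions of) the loop at `one` have strictly negative (mean)
weight. -/
def Standing (𝒳 : Set (Fin m → Fin m → EReal)) (Asup Ainf : Fin m → Fin m → EReal)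
    (one : Fin m) : Prop :=
  𝒳.Nonempty ∧
  (∀ X ∈ 𝒳, ∀ i j, X i j ≠ ⊤) ∧
  (∀ i j, Asup i j = ⨆ X ∈ 𝒳, X i j) ∧
  (∀ i j, Ainf i j = ⨅ X ∈ 𝒳, X i j) ∧
  (∀ i j, Asup i j ≠ ⊤) ∧
  (∀ X ∈ 𝒳, ∀ i j, X i j ≠ ⊥ → Ainf i j ≠ ⊥) ∧
  (∀ X ∈ 𝒳, irreducible X) ∧
  irreducible Ainf ∧
  (∀ X ∈ 𝒳, geomEq X Ainf) ∧
  (∀ X ∈ 𝒳, X one one = 0) ∧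
  (∀ X ∈ 𝒳, ∀ W, isCycle X W → (∃ v ∈ W, v ≠ one) → wWeight X W < 0) ∧
  Asup one one = 0 ∧
  (∀ W, isCycle Asup W → (∃ v ∈ W, v ≠ one) → wWeight Asup W < 0)


/-! ### Auxiliary lemmas -/

section Aux

variable {M N : ℕ → Fin m → Fin m → EReal}

lemma tw_cons_cons (s : ℕ) (a b : Fin m) (t : List (Fin m)) :
    tw M s (a :: b :: t) = M (s + 1) a b + tw M (s + 1) (b :: t) := rfl

lemma twalk_cons_cons (s : ℕ) (a b : Fin m) (t : List (Fin m)) :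
    twalk M s (a :: b :: t) ↔ M (s + 1) a b ≠ ⊥ ∧ twalk M (s + 1) (b :: t) := Iff.rfl

lemma tw_append_cons : ∀ (X : List (Fin m)) (u : Fin m) (Y : List (Fin m)) (s : ℕ),
    tw M s (X ++ u :: Y) = tw M s (X ++ [u]) + tw M (s + X.length) (u :: Y)
  | [], u, Y, s => by
      show tw M s (u :: Y) = 0 + tw M s (u :: Y)
      rw [zero_add]
  | [a], u, Y, s => by
      show M (s + 1) a u + tw M (s + 1) (u :: Y)
        = (M (s + 1) a u + 0) + tw M (s + 1) (u :: Y)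
      rw [add_zero]
  | a :: b :: X', u, Y, s => by
      have hlen : s + 1 + (b :: X').length = s + (a :: b :: X').length := by
        simp only [List.length_cons]; omega
      have IH := tw_append_cons (b :: X') u Y (s + 1)
      rw [hlen] at IH
      simp only [List.cons_append] at *
      rw [tw_cons_cons, tw_cons_cons, IH, ← add_assoc]

lemma twalk_append_cons : ∀ (X : List (Fin m)) (u : Fin m) (Y : List (Fin m)) (s : ℕ),
    twalk M s (X ++ u :: Y) ↔ twalk M s (X ++ [u]) ∧ twalk M (s + X.length) (u :: Y)
  | [], u, Y, s => by
      show twalk M s (u :: Y) ↔ True ∧ twalk M s (u :: Y)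
      exact ⟨fun h => ⟨trivial, h⟩, fun h => h.2⟩
  | [a], u, Y, s => by
      show (M (s + 1) a u ≠ ⊥ ∧ twalk M (s + 1) (u :: Y)) ↔
        (M (s + 1) a u ≠ ⊥ ∧ True) ∧ twalk M (s + 1) (u :: Y)
      tauto
  | a :: b :: X', u, Y, s => by
      have IH := twalk_append_cons (b :: X') u Y (s + 1)
      simp only [List.cons_append] at *
      rw [twalk_cons_cons, twalk_cons_cons, IH]
      have : s + 1 + (b :: X').length = s + (a :: b :: X').length := by
        simp only [List.length_cons]; ring_nf
      rw [this, and_assoc]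

lemma tw_mono : ∀ (W : List (Fin m)) (s : ℕ),
    (∀ l a b, s < l → l < s + W.length → M l a b ≤ N l a b) →
    tw M s W ≤ tw N s W
  | [], s, _ => le_refl _
  | [a], s, _ => le_refl _
  | a :: b :: t, s, h => by
      rw [tw_cons_cons, tw_cons_cons]
      refine add_le_add (h (s + 1) a b (by omega) (by simp only [List.length_cons]; omega)) ?_
      exact tw_mono (b :: t) (s + 1) fun l x y hl hl' => by
        refine h l x y (by omega) ?_
        simp only [List.length_cons] at *
        omega

lemma twalk_mono : ∀ (W : List (Fin m)) (s : ℕ),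
    (∀ l a b, s < l → l < s + W.length → M l a b ≠ ⊥ → N l a b ≠ ⊥) →
    twalk M s W → twalk N s W
  | [], s, _, hw => hw.elim
  | [a], s, _, _ => trivial
  | a :: b :: t, s, h, hw => by
      rw [twalk_cons_cons] at *
      refine ⟨h (s + 1) a b (by omega) (by simp only [List.length_cons]; omega) hw.1, ?_⟩
      exact twalk_mono (b :: t) (s + 1)
        (fun l x y hl hl' => by
          refine h l x y (by omega) ?_
          simp only [List.length_cons] at *
          omega) hw.2

lemma tw_const_shift (A : Fin m → Fin m → EReal) :
    ∀ (W : List (Fin m)) (s s' : ℕ),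
    tw (fun _ => A) s W = tw (fun _ => A) s' W
  | [], _, _ => rfl
  | [a], _, _ => rfl
  | a :: b :: t, s, s' => by
      rw [tw_cons_cons, tw_cons_cons, tw_const_shift A (b :: t) (s + 1) (s' + 1)]

lemma twalk_const_shift (A : Fin m → Fin m → EReal) :
    ∀ (W : List (Fin m)) (s s' : ℕ),
    twalk (fun _ => A) s W → twalk (fun _ => A) s' W
  | [], _, _ => fun h => h.elim
  | [a], _, _ => fun _ => trivial
  | a :: b :: t, s, s' => fun h => by
      rw [twalk_cons_cons] at *
      exact ⟨h.1, twalk_const_shift A (b :: t) (s + 1) (s' + 1) h.2⟩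

lemma tw_ne_top : ∀ (W : List (Fin m)) (s : ℕ),
    (∀ l a b, s < l → l < s + W.length → M l a b ≠ ⊤) →
    tw M s W ≠ ⊤
  | [], s, _ => by simp [tw]
  | [a], s, _ => by simp [tw]
  | a :: b :: t, s, h => by
      rw [tw_cons_cons]
      refine (EReal.add_lt_top (h (s + 1) a b (by omega) (by simp only [List.length_cons]; omega)) ?_).ne
      exact tw_ne_top (b :: t) (s + 1) fun l x y hl hl' => by
        refine h l x y (by omega) ?_
        simp only [List.length_cons] at *
        omega

lemma twalk_of_tw_ne_bot : ∀ (W : List (Fin m)) (s : ℕ), W ≠ [] →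
    tw M s W ≠ ⊥ → twalk M s W
  | [], _, h, _ => absurd rfl h
  | [a], _, _, _ => trivial
  | a :: b :: t, s, _, h => by
      rw [tw_cons_cons] at h
      rw [twalk_cons_cons]
      rw [ne_eq, EReal.add_eq_bot_iff] at h
      push_neg at h
      exact ⟨h.1, twalk_of_tw_ne_bot (b :: t) (s + 1) (by simp) h.2⟩

lemma tw_real : ∀ (W : List (Fin m)) (s : ℕ), twalk M s W →
    (∀ l a b, s < l → l < s + W.length → M l a b ≠ ⊤) →
    ∃ r : ℝ, tw M s W = (r : EReal)
  | [a], s, _, _ => ⟨0, by simp [tw]⟩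
  | a :: b :: t, s, hw, h => by
      rw [twalk_cons_cons] at hw
      obtain ⟨r, hr⟩ := tw_real (b :: t) (s + 1) hw.2 fun l x y hl hl' => by
        refine h l x y (by omega) ?_
        simp only [List.length_cons] at *
        omega
      have hne : M (s + 1) a b ≠ ⊤ := h (s + 1) a b (by omega) (by simp only [List.length_cons]; omega)
      refine ⟨(M (s + 1) a b).toReal + r, ?_⟩
      rw [tw_cons_cons, hr, EReal.coe_add, EReal.coe_toReal hne hw.1]

end Aux

section Aux2

variable {M : ℕ → Fin m → Fin m → EReal}

lemma tw_replicate (z : Fin m) : ∀ (c s : ℕ),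
    (∀ l, s < l → l ≤ s + c → M l z z = 0) →
    tw M s (z :: List.replicate c z) = 0
  | 0, s, _ => rfl
  | c + 1, s, h => by
      rw [List.replicate_succ, tw_cons_cons,
        tw_replicate z c (s + 1) (fun l h1 h2 => h l (by omega) (by omega)),
        h (s + 1) (by omega) (by omega), add_zero]

lemma tw_pad (z : Fin m) : ∀ (c s : ℕ) (T : List (Fin m)),
    (∀ l, s < l → l ≤ s + c → M l z z = 0) →
    tw M s (List.replicate c z ++ z :: T) = tw M (s + c) (z :: T)
  | 0, s, T, _ => by simp
  | c + 1, s, T, h => by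
      obtain ⟨L', hL⟩ : ∃ L', List.replicate c z ++ z :: T = z :: L' := by
        cases c with
        | zero => exact ⟨T, by simp⟩
        | succ c' => exact ⟨List.replicate c' z ++ z :: T, by rw [List.replicate_succ,
            List.cons_append]⟩
      rw [List.replicate_succ, List.cons_append, hL, tw_cons_cons,
        h (s + 1) (by omega) (by omega), zero_add, ← hL,
        tw_pad z c (s + 1) T (fun l h1 h2 => h l (by omega) (by omega))]
      congr 1
      omega

lemma tw_concat (s : ℕ) (Y : List (Fin m)) (a b : Fin m) :
    tw M s ((Y ++ [a]) ++ [b]) = tw M s (Y ++ [a]) + M (s + Y.length + 1) a b := by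
  have h := tw_append_cons (M := M) Y a [b] s
  rw [List.append_assoc, List.singleton_append] at *
  rw [h, tw_cons_cons]
  have h2 : tw M (s + Y.length + 1) [b] = 0 := rfl
  rw [h2, add_zero]

/-- Splitting a list at the first occurrence of `z`. -/
lemma first_split {z : Fin m} : ∀ {W : List (Fin m)}, z ∈ W →
    ∃ U V, W = U ++ z :: V ∧ z ∉ U
  | [], h => absurd h List.not_mem_nil
  | a :: t, h => by
      by_cases ha : a = z
      · exact ⟨[], t, by simp [ha], List.not_mem_nil⟩
      · have : z ∈ t := by
          rcases List.mem_cons.1 h with h' | h'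
          · exact absurd h'.symm ha
          · exact h'
        obtain ⟨U, V, hUV, hzU⟩ := first_split this
        refine ⟨a :: U, V, by simp [hUV], ?_⟩
        intro hmem
        rcases List.mem_cons.1 hmem with h' | h'
        · exact ha h'.symm
        · exact hzU h'

/-- Splitting a list at the last occurrence of `z`. -/
lemma last_split {z : Fin m} : ∀ {W : List (Fin m)}, z ∈ W →
    ∃ U V, W = U ++ z :: V ∧ z ∉ V
  | [], h => absurd h List.not_mem_nil
  | a :: t, h => by
      by_cases ht : z ∈ t
      · obtain ⟨U, V, hUV, hzV⟩ := last_split ht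
        exact ⟨a :: U, V, by simp [hUV], hzV⟩
      · have ha : a = z := by
          rcases List.mem_cons.1 h with h' | h'
          · exact h'.symm
          · exact absurd h' ht
        exact ⟨[], t, by simp [ha], ht⟩

/-- Extracting a duplicated element. -/
lemma dup_split : ∀ {W : List (Fin m)}, ¬ W.Nodup →
    ∃ (x : Fin m) (X Y Z : List (Fin m)), W = X ++ x :: Y ++ x :: Z
  | [], h => absurd List.nodup_nil h
  | a :: t, h => by
      rw [List.nodup_cons] at h
      push_neg at h
      by_cases ha : a ∈ t
      · obtain ⟨Y, Z, hYZ⟩ := List.append_of_mem ha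
        exact ⟨a, [], Y, Z, by simp [hYZ]⟩
      · obtain ⟨x, X, Y, Z, hXYZ⟩ := dup_split (h ha)
        exact ⟨x, a :: X, Y, Z, by simp [hXYZ]⟩

/-- Any list of length `k+1` with the right endpoints has weight at most `Gamma M k i j`. -/
lemma tw_le_Gamma : ∀ (k : ℕ) (i j : Fin m) (W : List (Fin m)),
    W.length = k + 1 → W.head? = some i → W.getLast? = some j →
    tw M 0 W ≤ Gamma M k i j
  | 0, i, j, W, hlen, hh, hl => by
      obtain ⟨x, rfl⟩ : ∃ x, W = [x] := by
        cases W with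
        | nil => simp at hlen
        | cons a t =>
            cases t with
            | nil => exact ⟨a, rfl⟩
            | cons b t' => simp [List.length_cons] at hlen
      simp only [List.head?_cons, Option.some_inj] at hh
      simp only [List.getLast?_singleton, Option.some_inj] at hl
      obtain rfl := hh
      obtain rfl := hl
      have h0 : tw M 0 [x] = 0 := rfl
      rw [h0]
      simp [Gamma]
  | k + 1, i, j, W, hlen, hh, hl => by
      obtain ⟨V, rfl⟩ : ∃ V, W = V ++ [j] := List.getLast?_eq_some_iff.1 hl
      have hVlen : V.length = k + 1 := by
        simp only [List.length_append, List.length_cons, List.length_nil] at hlen; omega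
      have hVne : V ≠ [] := by intro h; rw [h] at hVlen; simp at hVlen
      obtain ⟨Y, a, rfl⟩ : ∃ Y a, V = Y ++ [a] := by
        obtain ⟨a, ha⟩ := List.getLast?_eq_some_iff.1
          (List.getLast?_eq_getLast hVne ▸ rfl : V.getLast? = some (V.getLast hVne))
        exact ⟨a, V.getLast hVne, ha⟩
      have hh' : (Y ++ [a]).head? = some i := by
        rwa [List.head?_append_of_ne_nil _ hVne] at hh
      have hY : Y.length = k := by
        simp only [List.length_append, List.length_cons, List.length_nil] at hVlen; omega
      have hGa : (Y ++ [a]).getLast? = some a := by simp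
      calc tw M 0 ((Y ++ [a]) ++ [j])
        = tw M 0 (Y ++ [a]) + M (0 + Y.length + 1) a j := tw_concat 0 Y a j
      _ ≤ Gamma M k i a + M (k + 1) a j := by
          rw [hY, Nat.zero_add]
          exact add_le_add_left (tw_le_Gamma k i a (Y ++ [a]) hVlen hh' hGa) _
      _ ≤ Gamma M (k + 1) i j := le_iSup (fun s => Gamma M k i s + M (k + 1) s j) a

/-- `Gamma M k i j` is attained by some quasi-walk (for `k ≥ 1`). -/
lemma Gamma_attained (k : ℕ) (hk : 1 ≤ k) (i j : Fin m) :
    ∃ W : List (Fin m), W.length = k + 1 ∧ W.head? = some i ∧ W.getLast? = some j ∧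
      tw M 0 W = Gamma M k i j := by
  induction k, hk using Nat.le_induction generalizing j with
  | base =>
      refine ⟨[i, j], by simp, by simp, by simp, ?_⟩
      have h1 : Gamma M 1 i j = ⨆ s, Gamma M 0 i s + M 1 s j := rfl
      have h2 : (⨆ s, Gamma M 0 i s + M 1 s j) = M 1 i j := by
        apply le_antisymm
        · refine iSup_le fun s => ?_
          by_cases hs : i = s
          · subst hs; simp [Gamma]
          · simp [Gamma, hs]
        · have := le_iSup (fun s => Gamma M 0 i s + M 1 s j) i
          simpa [Gamma] using this
      rw [h1, h2]
      have h3 : tw M 1 [j] = 0 := rfl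
      rw [tw_cons_cons, h3, add_zero]
  | succ k hk IH =>
      have : Nonempty (Fin m) := ⟨i⟩
      obtain ⟨s₀, hs₀⟩ := Finite.exists_max (fun s => Gamma M k i s + M (k + 1) s j)
      obtain ⟨W₀, hW₀len, hW₀h, hW₀l, hW₀w⟩ := IH s₀
      obtain ⟨Y, rfl⟩ : ∃ Y, W₀ = Y ++ [s₀] := List.getLast?_eq_some_iff.1 hW₀l
      have hYne : Y ++ [s₀] ≠ [] := by simp
      have hY : Y.length = k := by
        simp only [List.length_append, List.length_cons, List.length_nil] at hW₀len; omega
      refine ⟨(Y ++ [s₀]) ++ [j], ?_, ?_, by simp, ?_⟩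
      · simp only [List.length_append, List.length_cons, List.length_nil] at hW₀len ⊢; omega
      · rwa [List.head?_append_of_ne_nil _ hYne]
      · rw [tw_concat, hW₀w, hY, Nat.zero_add]
        have hG : Gamma M (k + 1) i j = ⨆ s, Gamma M k i s + M (k + 1) s j := rfl
        rw [hG, le_antisymm (iSup_le hs₀) (le_iSup (fun s => Gamma M k i s + M (k + 1) s j) s₀)]

end Aux2

section Aux3

variable {A : Fin m → Fin m → EReal} {z : Fin m}

lemma head?_append_cons (X : List (Fin m)) (x : Fin m) (R R' : List (Fin m)) :
    (X ++ x :: R).head? = (X ++ x :: R').head? := by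
  cases X <;> rfl

lemma tw_surgery (A : Fin m → Fin m → EReal) (X Y Z : List (Fin m)) (x : Fin m) :
    wWeight A (X ++ (x :: Y) ++ (x :: Z)) =
      wWeight A (X ++ x :: Z) + wWeight A ((x :: Y) ++ [x]) := by
  unfold wWeight
  have e1 : tw (fun _ => A) 0 (X ++ (x :: Y) ++ (x :: Z))
      = tw (fun _ => A) 0 (X ++ [x]) + tw (fun _ => A) (0 + X.length) ((x :: Y) ++ (x :: Z)) := by
    rw [List.append_assoc, List.cons_append]
    exact tw_append_cons X x (Y ++ x :: Z) 0
  have e2 : tw (fun _ => A) (0 + X.length) ((x :: Y) ++ (x :: Z))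
      = tw (fun _ => A) (0 + X.length) ((x :: Y) ++ [x])
        + tw (fun _ => A) (0 + X.length + (x :: Y).length) (x :: Z) :=
    tw_append_cons (x :: Y) x Z (0 + X.length)
  have e3 : tw (fun _ => A) 0 (X ++ x :: Z)
      = tw (fun _ => A) 0 (X ++ [x]) + tw (fun _ => A) (0 + X.length) (x :: Z) :=
    tw_append_cons X x Z 0
  rw [e1, e2, e3,
    tw_const_shift A ((x :: Y) ++ [x]) (0 + X.length) 0,
    tw_const_shift A (x :: Z) (0 + X.length + (x :: Y).length) (0 + X.length)]
  abel

lemma twalk_surgery (X Y Z : List (Fin m)) (x : Fin m)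
    (h : isWalk A (X ++ (x :: Y) ++ (x :: Z))) :
    isWalk A (X ++ x :: Z) ∧ isWalk A ((x :: Y) ++ [x]) := by
  unfold isWalk at *
  rw [List.append_assoc, List.cons_append] at h
  rw [twalk_append_cons] at h
  obtain ⟨h1, h2⟩ := h
  have h2' : twalk (fun _ => A) (0 + X.length) ((x :: Y) ++ (x :: Z)) := h2
  rw [twalk_append_cons] at h2'
  obtain ⟨h3, h4⟩ := h2'
  constructor
  · rw [twalk_append_cons]
    exact ⟨h1, twalk_const_shift A (x :: Z) _ _ h4⟩
  · exact twalk_const_shift A ((x :: Y) ++ [x]) _ _ h3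

/-- Path extraction with cycle-mean bound `lam`. -/
lemma extract (lam : ℝ)
    (hcb : ∀ C, isCycle A C → (∀ v ∈ C, v ≠ z) →
      wWeight A C ≤ ((((C.length : ℝ) - 1) * lam : ℝ) : EReal)) :
    ∀ (N : ℕ) (W : List (Fin m)), W.length ≤ N → W ≠ [] →
    (∀ v, v ∈ W.dropLast → v ∈ W.tail → v ≠ z) → isWalk A W →
    ∃ (P : List (Fin m)) (c : ℕ), isPath A P ∧ P.head? = W.head? ∧
      P.getLast? = W.getLast? ∧ (∀ v ∈ P, v ∈ W) ∧ P.length + c = W.length ∧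
      wWeight A W ≤ wWeight A P + (((c : ℝ) * lam : ℝ) : EReal) := by
  intro N
  induction N with
  | zero => intro W hlen hne; exact absurd (List.length_eq_zero_iff.1 (Nat.le_zero.1 hlen)) hne
  | succ N IH =>
      intro W hlen hne hH hwalk
      by_cases hnd : W.Nodup
      · refine ⟨W, 0, ⟨hwalk, hnd⟩, rfl, rfl, fun v hv => hv, by omega, ?_⟩
        simp
      · obtain ⟨x, X, Y, Z, rfl⟩ := dup_split hnd
        set W := X ++ (x :: Y) ++ (x :: Z) with hW
        have hW'ne : X ++ x :: Z ≠ [] := by simp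
        have hWd : W.dropLast = X ++ (x :: Y) ++ (x :: Z).dropLast := by
          rw [hW, List.append_assoc, List.dropLast_append_of_ne_nil (by simp),
            List.dropLast_append_of_ne_nil (by simp), ← List.append_assoc]
        have hW'd : (X ++ x :: Z).dropLast = X ++ (x :: Z).dropLast :=
          List.dropLast_append_of_ne_nil (by simp)
        -- membership of the cycle's nodes in dropLast and tail of W
        have hmemd : ∀ v, (v = x ∨ v ∈ Y) → v ∈ W.dropLast := by
          intro v hv
          rw [hWd]
          rcases hv with rfl | hv
          · simp
          · simp [hv]
        have hmemt : ∀ v, (v = x ∨ v ∈ Y) → v ∈ W.tail := by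
          intro v hv
          rw [hW]
          cases X with
          | nil =>
              simp only [List.nil_append, List.cons_append, List.tail_cons]
              rcases hv with rfl | hv
              · simp
              · simp [hv]
          | cons a X0 =>
              simp only [List.cons_append, List.tail_cons]
              rcases hv with rfl | hv
              · simp
              · simp [hv]
        -- the cycle avoids z
        have hCavoid : ∀ v ∈ (x :: Y) ++ [x], v ≠ z := by
          intro v hv
          have : v = x ∨ v ∈ Y := by
            simp only [List.mem_append, List.mem_cons, List.mem_singleton] at hv
            tauto
          exact hH v (hmemd v this) (hmemt v this)
        obtain ⟨hwalk', hcwalk⟩ := twalk_surgery X Y Z x hwalk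
        -- the cycle bound
        have hC : isCycle A ((x :: Y) ++ [x]) := by
          refine ⟨hcwalk, by simp, ?_⟩
          exact (rfl : ((x :: Y) ++ [x]).head? = some x).trans List.getLast?_concat.symm
        have hCb := hcb _ hC hCavoid
        -- the new walk is shorter
        have hlen' : (X ++ x :: Z).length ≤ N := by
          rw [hW] at hlen
          simp only [List.length_append, List.length_cons] at hlen ⊢
          omega
        -- hypothesis H for the new walk
        have hH' : ∀ v, v ∈ (X ++ x :: Z).dropLast → v ∈ (X ++ x :: Z).tail → v ≠ z := by
          intro v hd ht
          refine hH v ?_ ?_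
          · rw [hW'd] at hd
            rw [hWd]
            simp only [List.mem_append] at hd ⊢
            tauto
          · rw [hW]
            cases X with
            | nil =>
                simp only [List.nil_append, List.tail_cons] at ht ⊢
                simp only [List.cons_append, List.tail_cons]
                simp only [List.mem_append, List.mem_cons] at ht ⊢
                tauto
            | cons a X0 =>
                simp only [List.cons_append, List.tail_cons] at ht ⊢
                simp only [List.mem_append, List.mem_cons] at ht ⊢
                tauto
        obtain ⟨P, c', hP, hPh, hPl, hPmem, hPlen, hPw⟩ :=
          IH (X ++ x :: Z) hlen' hW'ne hH' hwalk'
        refine ⟨P, c' + (Y.length + 1), hP, ?_, ?_, ?_, ?_, ?_⟩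
        · rw [hPh, hW]
          rw [List.append_assoc, List.cons_append]
          exact head?_append_cons X x Z (Y ++ x :: Z)
        · rw [hPl, hW, List.getLast?_append_of_ne_nil _ (l₂ := x :: Z) (by simp),
            List.append_assoc, List.getLast?_append_of_ne_nil _ (by simp),
            List.getLast?_append_of_ne_nil _ (by simp)]
        · intro v hv
          have := hPmem v hv
          rw [hW]
          simp only [List.mem_append, List.mem_cons] at this ⊢
          tauto
        · rw [hW]
          simp only [List.length_append, List.length_cons] at hPlen ⊢
          omega
        · have hsur := tw_surgery A X Y Z x
          rw [hsur]
          calc wWeight A (X ++ x :: Z) + wWeight A ((x :: Y) ++ [x])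
              ≤ (wWeight A P + (((c' : ℝ) * lam : ℝ) : EReal))
                + (((((x :: Y) ++ [x]).length : ℝ) - 1) * lam : ℝ) := add_le_add hPw hCb
            _ = wWeight A P + ((((c' + (Y.length + 1) : ℕ) : ℝ) * lam : ℝ) : EReal) := by
                rw [add_assoc, ← EReal.coe_add]
                congr 2
                have : ((((x :: Y) ++ [x]).length : ℝ) - 1) = ((Y.length : ℝ) + 1) := by
                  simp only [List.length_append, List.length_cons, List.length_nil]
                  push_cast
                  ring
                rw [this]
                push_cast
                ring

end Aux3

section Aux4

variable {A : Fin m → Fin m → EReal} {z : Fin m}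

/-- Any closed walk (in the quasi sense) on `D_A` has nonpositive weight. -/
lemma closed_le_zero (hz : A z z = 0)
    (hneg : ∀ W, isCycle A W → (∃ v ∈ W, v ≠ z) → wWeight A W < 0) :
    ∀ W : List (Fin m), W ≠ [] → W.head? = W.getLast? → wWeight A W ≤ 0 := by
  intro W hne hcl
  rcases Nat.lt_or_ge W.length 2 with hlt | hge
  · obtain ⟨val, rfl⟩ : ∃ x, W = [x] := by
      cases W with
      | nil => exact absurd rfl hne
      | cons a t =>
          cases t with
          | nil => exact ⟨a, rfl⟩
          | cons b t' => exact absurd hlt (by simp [List.length_cons])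
    exact le_of_eq (rfl : wWeight A [val] = 0)
  · by_cases hbot : wWeight A W = ⊥
    · rw [hbot]; exact bot_le
    · have hwalk : isWalk A W := twalk_of_tw_ne_bot W 0 hne hbot
      by_cases hex : ∃ v ∈ W, v ≠ z
      · exact (hneg W ⟨hwalk, hge, hcl⟩ hex).le
      · push_neg at hex
        obtain ⟨c, hc⟩ : ∃ c, W.length = c + 1 := by
          cases W with
          | nil => exact absurd rfl hne
          | cons a t => exact ⟨t.length, by simp⟩
        have hrep : W = z :: List.replicate c z := by
          have h := List.eq_replicate_iff.2 ⟨hc, hex⟩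
          rw [h, List.replicate_succ]
        rw [hrep]
        exact le_of_eq (tw_replicate z c 0 (fun l _ _ => hz))

/-- Any cycle avoiding `z` has real weight at most `(length - 1) * λ*`. -/
lemma cycle_le_lamStar (h_ne_top : ∀ a b, A a b ≠ ⊤)
    (hneg : ∀ W, isCycle A W → (∃ v ∈ W, v ≠ z) → wWeight A W < 0) :
    ∀ C, isCycle A C → (∀ v ∈ C, v ≠ z) →
      wWeight A C ≤ ((((C.length : ℝ) - 1) * lamStar A z : ℝ) : EReal) := by
  have hub : ∀ x ∈ lamSet A z, x ≤ (0 : ℝ) := by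
    rintro x ⟨W, hC, hav, r, hw, rfl⟩
    have hex : ∃ v ∈ W, v ≠ z := by
      obtain ⟨a, t, rfl⟩ : ∃ a t, W = a :: t := by
        cases W with
        | nil => exact absurd hC.2.1 (by simp)
        | cons a t => exact ⟨a, t, rfl⟩
      exact ⟨a, List.mem_cons_self, hav a List.mem_cons_self⟩
    have hneg' := hneg W hC hex
    rw [hw] at hneg'
    have hr : r < 0 := by exact_mod_cast hneg'
    have hd : (0 : ℝ) < (W.length : ℝ) - 1 := by
      have := hC.2.1
      have : (2 : ℝ) ≤ (W.length : ℝ) := by exact_mod_cast this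
      linarith
    exact (div_neg_of_neg_of_pos hr hd).le
  intro C hC hav
  obtain ⟨r, hr0⟩ := tw_real C 0 hC.1 (fun l a b _ _ => h_ne_top a b)
  have hr : wWeight A C = (r : EReal) := hr0
  have hmem : r / ((C.length : ℝ) - 1) ∈ lamSet A z := ⟨C, hC, hav, r, hr, rfl⟩
  have hle : r / ((C.length : ℝ) - 1) ≤ lamStar A z := le_csSup ⟨0, hub⟩ hmem
  have hd : (0 : ℝ) < (C.length : ℝ) - 1 := by
    have := hC.2.1
    have : (2 : ℝ) ≤ (C.length : ℝ) := by exact_mod_cast this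
    linarith
  have : r ≤ ((C.length : ℝ) - 1) * lamStar A z := by
    rw [div_le_iff₀ hd] at hle
    linarith [hle]
  rw [hr]
  exact_mod_cast this

/-- Mediant inequality. -/
lemma mediant {r1 r2 d1 d2 : ℝ} (h1 : 0 < d1) (h2 : 0 < d2) :
    (r1 + r2) / (d1 + d2) ≤ max (r1 / d1) (r2 / d2) := by
  rw [div_le_iff₀ (by linarith)]
  have e1 : r1 = (r1 / d1) * d1 := by field_simp
  have e2 : r2 = (r2 / d2) * d2 := by field_simp
  calc r1 + r2 = (r1 / d1) * d1 + (r2 / d2) * d2 := by rw [← e1, ← e2]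
    _ ≤ max (r1 / d1) (r2 / d2) * d1 + max (r1 / d1) (r2 / d2) * d2 :=
        add_le_add (mul_le_mul_of_nonneg_right (le_max_left _ _) h1.le)
          (mul_le_mul_of_nonneg_right (le_max_right _ _) h2.le)
    _ = max (r1 / d1) (r2 / d2) * (d1 + d2) := by ring

/-- `λ* < 0`. -/
lemma lamStar_neg (h_ne_top : ∀ a b, A a b ≠ ⊤)
    (hneg : ∀ W, isCycle A W → (∃ v ∈ W, v ≠ z) → wWeight A W < 0)
    (hcyc : ∃ W, isCycle A W ∧ ∀ v ∈ W, v ≠ z) :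
    lamStar A z < 0 := by
  classical
  have T0def : True := trivial
  set T0 : Set ℝ := {x | ∃ W : List (Fin m), isCycle A W ∧ (∀ v ∈ W, v ≠ z) ∧
    W.length ≤ m + 1 ∧ ∃ r : ℝ, wWeight A W = (r : EReal) ∧
      x = r / ((W.length : ℝ) - 1)} with hT0
  have hT0fin : T0.Finite := by
    apply Set.Finite.subset (Set.Finite.image
      (fun W : List (Fin m) => (wWeight A W).toReal / ((W.length : ℝ) - 1))
      (List.finite_length_le (Fin m) (m + 1)))
    rintro x ⟨W, hC, hav, hlen, r, hw, rfl⟩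
    exact ⟨W, hlen, by simp only [hw, EReal.toReal_coe]⟩
  -- elements of T0 are negative
  have hT0neg : ∀ x ∈ T0, x < 0 := by
    rintro x ⟨W, hC, hav, hlen, r, hw, rfl⟩
    have hex : ∃ v ∈ W, v ≠ z := by
      obtain ⟨a, t, rfl⟩ : ∃ a t, W = a :: t := by
        cases W with
        | nil => exact absurd hC.2.1 (by simp)
        | cons a t => exact ⟨a, t, rfl⟩
      exact ⟨a, List.mem_cons_self, hav a List.mem_cons_self⟩
    have hneg' := hneg W hC hex
    rw [hw] at hneg'
    have hr : r < 0 := by exact_mod_cast hneg'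
    have hd : (0 : ℝ) < (W.length : ℝ) - 1 := by
      have h2 := hC.2.1
      have : (2 : ℝ) ≤ (W.length : ℝ) := by exact_mod_cast h2
      linarith
    exact div_neg_of_neg_of_pos hr hd
  -- descent: every cycle mean is bounded by some element of T0
  have key : ∀ (N : ℕ) (C : List (Fin m)), C.length ≤ N → isCycle A C →
      (∀ v ∈ C, v ≠ z) → ∀ r : ℝ, wWeight A C = (r : EReal) →
      ∃ t ∈ T0, r / ((C.length : ℝ) - 1) ≤ t := by
    intro N
    induction N with
    | zero => intro C hlen hC; exact absurd hC.2.1 (by omega)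
    | succ N IH =>
        intro C hlen hC hav r hw
        by_cases hsmall : C.length ≤ m + 1
        · exact ⟨r / ((C.length : ℝ) - 1), ⟨C, hC, hav, hsmall, r, hw, rfl⟩, le_refl _⟩
        · push_neg at hsmall
          have hCne : C ≠ [] := by intro h; rw [h] at hsmall; simp at hsmall
          have hdz : ¬ C.dropLast.Nodup := by
            intro hnd
            have := hnd.length_le_card
            rw [List.length_dropLast, Fintype.card_fin] at this
            omega
          obtain ⟨x, X, Y, Z', hsplit⟩ := dup_split hdz
          obtain ⟨Z, hZ⟩ : ∃ Z : List (Fin m), Z = Z' ++ [C.getLast hCne] := ⟨_, rfl⟩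
          have hZne : Z ≠ [] := by rw [hZ]; simp
          have hCeq : C = X ++ (x :: Y) ++ (x :: Z) := by
            rw [hZ]
            calc C = C.dropLast ++ [C.getLast hCne] := (List.dropLast_append_getLast hCne).symm
              _ = (X ++ (x :: Y) ++ (x :: Z')) ++ [C.getLast hCne] := by rw [hsplit]
              _ = X ++ (x :: Y) ++ (x :: (Z' ++ [C.getLast hCne])) := by
                  simp only [List.append_assoc, List.cons_append]
          have hZpos : 1 ≤ Z.length := by
            rw [hZ]
            simp only [List.length_append, List.length_cons, List.length_nil]
            omega
          -- the two shorter cycles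
          have hwalk2 := twalk_surgery X Y Z x (hCeq ▸ hC.1)
          have hC1 : isCycle A ((x :: Y) ++ [x]) := by
            refine ⟨hwalk2.2, by simp, ?_⟩
            exact (rfl : ((x :: Y) ++ [x]).head? = some x).trans
              List.getLast?_concat.symm
          have hC2 : isCycle A (X ++ x :: Z) := by
            refine ⟨hwalk2.1, ?_, ?_⟩
            · simp only [List.length_append, List.length_cons]; omega
            · have hh : (X ++ x :: Z).head? = C.head? := by
                rw [hCeq, List.append_assoc, List.cons_append]
                exact head?_append_cons X x Z (Y ++ x :: Z)
              have hl : (X ++ x :: Z).getLast? = C.getLast? := by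
                rw [hCeq, List.getLast?_append_of_ne_nil _ (l₂ := x :: Z) (by simp),
                  List.append_assoc, List.getLast?_append_of_ne_nil _ (by simp),
                  List.getLast?_append_of_ne_nil _ (by simp)]
              rw [hh, hl, hC.2.2]
          have hav1 : ∀ v ∈ (x :: Y) ++ [x], v ≠ z := fun v hv => hav v (by
            rw [hCeq]
            simp only [List.mem_append, List.mem_cons, List.mem_singleton] at hv ⊢
            tauto)
          have hav2 : ∀ v ∈ X ++ x :: Z, v ≠ z := fun v hv => hav v (by
            rw [hCeq]
            simp only [List.mem_append, List.mem_cons, List.mem_singleton] at hv ⊢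
            tauto)
          -- real weights
          obtain ⟨r1, hr10⟩ := tw_real ((x :: Y) ++ [x]) 0 hC1.1 (fun l a b _ _ => h_ne_top a b)
          obtain ⟨r2, hr20⟩ := tw_real (X ++ x :: Z) 0 hC2.1 (fun l a b _ _ => h_ne_top a b)
          have hr1 : wWeight A ((x :: Y) ++ [x]) = (r1 : EReal) := hr10
          have hr2 : wWeight A (X ++ x :: Z) = (r2 : EReal) := hr20
          have hsum : r = r2 + r1 := by
            have h := tw_surgery A X Y Z x
            rw [← hCeq, hw, hr1, hr2, ← EReal.coe_add] at h
            exact_mod_cast h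
          -- lengths
          have hlen1 : ((x :: Y) ++ [x]).length = Y.length + 2 := by simp
          have hlenC : C.length = X.length + Y.length + Z.length + 2 := by
            rw [hCeq]; simp only [List.length_append, List.length_cons]; omega
          have hlen2 : (X ++ x :: Z).length = X.length + Z.length + 1 := by
            simp only [List.length_append, List.length_cons]; omega
          -- mediant
          have hd1 : (0 : ℝ) < ((((x :: Y) ++ [x]).length : ℝ) - 1) := by
            rw [hlen1]; push_cast; linarith
          have hd2 : (0 : ℝ) < (((X ++ x :: Z).length : ℝ) - 1) := by
            rw [hlen2]; push_cast [hZpos]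
            have : (1 : ℝ) ≤ (Z.length : ℝ) := by exact_mod_cast hZpos
            linarith
          have hdsum : ((C.length : ℝ) - 1) =
              (((X ++ x :: Z).length : ℝ) - 1) + ((((x :: Y) ++ [x]).length : ℝ) - 1) := by
            rw [hlen1, hlen2, hlenC]; push_cast; ring
          have hmed : r / ((C.length : ℝ) - 1) ≤
              max (r2 / (((X ++ x :: Z).length : ℝ) - 1))
                (r1 / ((((x :: Y) ++ [x]).length : ℝ) - 1)) := by
            rw [hsum, hdsum]
            exact mediant hd2 hd1
          rcases max_cases (r2 / (((X ++ x :: Z).length : ℝ) - 1))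
              (r1 / ((((x :: Y) ++ [x]).length : ℝ) - 1)) with ⟨hmax, _⟩ | ⟨hmax, _⟩
          · obtain ⟨t, ht, hlet⟩ := IH (X ++ x :: Z)
              (by rw [hlen2]; rw [hlenC] at hlen; omega) hC2 hav2 r2 hr2
            exact ⟨t, ht, by rw [hmax] at hmed; linarith⟩
          · obtain ⟨t, ht, hlet⟩ := IH ((x :: Y) ++ [x])
              (by rw [hlen1]; rw [hlenC] at hlen; omega) hC1 hav1 r1 hr1
            exact ⟨t, ht, by rw [hmax] at hmed; linarith⟩

  -- conclude
  obtain ⟨W, hW, hWav⟩ := hcyc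
  obtain ⟨r, hr0⟩ := tw_real W 0 hW.1 (fun l a b _ _ => h_ne_top a b)
  have hr : wWeight A W = (r : EReal) := hr0
  have hmem : r / ((W.length : ℝ) - 1) ∈ lamSet A z := ⟨W, hW, hWav, r, hr, rfl⟩
  obtain ⟨t0, ht0, _⟩ := key W.length W (le_refl _) hW hWav r hr
  have hT0ne : T0.Nonempty := ⟨t0, ht0⟩
  have hmax := Set.Nonempty.csSup_mem hT0ne hT0fin
  have hbdd : BddAbove T0 := hT0fin.bddAbove
  have hlam_le : lamStar A z ≤ sSup T0 := by
    apply csSup_le ⟨_, hmem⟩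
    rintro x hx
    obtain ⟨W', hW', hav', r', hw', rfl⟩ := hx
    obtain ⟨t, ht, hlet⟩ := key W'.length W' (le_refl _) hW' hav' r' hw'
    exact hlet.trans (le_csSup hbdd ht)
  exact lt_of_le_of_lt hlam_le (hT0neg _ hmax)

end Aux4

section Aux5

variable {M : ℕ → Fin m → Fin m → EReal} {Asup Ainf : Fin m → Fin m → EReal}
  {z : Fin m} {k : ℕ}

/-- Trellis weight is bounded by the `Asup` weight. -/
lemma tw_le_wWeight_sup (hle : ∀ l a b, 1 ≤ l → l ≤ k → M l a b ≤ Asup a b)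
    (W : List (Fin m)) (s : ℕ) (hlev : s + W.length ≤ k + 1) :
    tw M s W ≤ wWeight Asup W := by
  refine (tw_mono W s fun l a b hl hl' => hle l a b (by omega) (by omega)).trans
    (le_of_eq (tw_const_shift Asup W s 0))

/-- Trellis weight is bounded below by the `Ainf` weight. -/
lemma tw_ge_wWeight_inf (hge : ∀ l a b, 1 ≤ l → l ≤ k → Ainf a b ≤ M l a b)
    (W : List (Fin m)) (s : ℕ) (hlev : s + W.length ≤ k + 1) :
    wWeight Ainf W ≤ tw M s W := by
  refine le_trans (le_of_eq (tw_const_shift Ainf W 0 s)) ?_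
  exact tw_mono W s fun l a b hl hl' => hge l a b (by omega) (by omega)

/-- A trellis walk is a walk on `D_{Asup}`. -/
lemma isWalk_sup_of_twalk (hle : ∀ l a b, 1 ≤ l → l ≤ k → M l a b ≤ Asup a b)
    (W : List (Fin m)) (s : ℕ) (hlev : s + W.length ≤ k + 1)
    (hw : twalk M s W) : isWalk Asup W := by
  refine twalk_const_shift Asup W s 0 ?_
  refine twalk_mono W s (fun l a b hl hl' hne hbot => hne ?_) hw
  have := hle l a b (by omega) (by omega)
  rw [hbot] at this
  exact le_bot_iff.1 this

/-- Closed trellis pieces have nonpositive weight. -/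
lemma trellis_closed_le (hle : ∀ l a b, 1 ≤ l → l ≤ k → M l a b ≤ Asup a b)
    (hz : Asup z z = 0)
    (hneg : ∀ W, isCycle Asup W → (∃ v ∈ W, v ≠ z) → wWeight Asup W < 0)
    (W : List (Fin m)) (s : ℕ) (hW : W ≠ []) (hcl : W.head? = W.getLast?)
    (hlev : s + W.length ≤ k + 1) :
    tw M s W ≤ 0 :=
  (tw_le_wWeight_sup hle W s hlev).trans (closed_le_zero hz hneg W hW hcl)

lemma cons_replicate_append (z : Fin m) (d : ℕ) (C : List (Fin m)) :
    z :: (List.replicate d z ++ C) = List.replicate d z ++ (z :: C) := by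
  rw [show z :: (List.replicate d z ++ C) = (z :: List.replicate d z) ++ C from rfl,
    ← List.replicate_succ, List.replicate_succ', List.append_assoc, List.singleton_append]

lemma head?_replicate_cons (z : Fin m) (c : ℕ) (T : List (Fin m)) :
    (List.replicate c z ++ z :: T).head? = some z := by
  cases c with
  | zero => rfl
  | succ c => rw [List.replicate_succ]; rfl

/-- Padding with loops at `z` on the right: bound by `Gamma M k i z`. -/
lemma le_Gamma_pad_right (hloop : ∀ l, 1 ≤ l → l ≤ k → M l z z = 0)
    (i : Fin m) (U : List (Fin m)) (hlen : U.length ≤ k)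
    (hh : (U ++ [z]).head? = some i) :
    tw M 0 (U ++ [z]) ≤ Gamma M k i z := by
  set c := k - U.length with hc
  have h1 : tw M 0 (U ++ z :: List.replicate c z)
      = tw M 0 (U ++ [z]) + tw M (0 + U.length) (z :: List.replicate c z) :=
    tw_append_cons U z (List.replicate c z) 0
  have h2 : tw M (0 + U.length) (z :: List.replicate c z) = 0 :=
    tw_replicate z c (0 + U.length) (fun l hl hl' => hloop l (by omega) (by omega))
  have h3 : tw M 0 (U ++ z :: List.replicate c z) = tw M 0 (U ++ [z]) := by
    rw [h1, h2, add_zero]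
  rw [← h3]
  refine tw_le_Gamma k i z _ ?_ ?_ ?_
  · simp only [List.length_append, List.length_cons, List.length_replicate]
    omega
  · rw [head?_append_cons U z (List.replicate c z) []]
    exact hh
  · rw [show z :: List.replicate c z = List.replicate c z ++ [z] by
      rw [← List.replicate_succ, List.replicate_succ'], ← List.append_assoc]
    exact List.getLast?_concat

/-- Padding with loops at `z` on the left: bound by `Gamma M k z j`. -/
lemma le_Gamma_pad_left (hloop : ∀ l, 1 ≤ l → l ≤ k → M l z z = 0)
    (j : Fin m) (T : List (Fin m)) (s : ℕ) (hs : s + T.length = k)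
    (hl : (z :: T).getLast? = some j) :
    tw M s (z :: T) ≤ Gamma M k z j := by
  have h1 : tw M 0 (List.replicate s z ++ z :: T) = tw M (0 + s) (z :: T) :=
    tw_pad z s 0 T (fun l hl hl' => hloop l (by omega) (by omega))
  have h2 : tw M s (z :: T) = tw M 0 (List.replicate s z ++ z :: T) := by
    rw [h1, Nat.zero_add]
  rw [h2]
  refine tw_le_Gamma k z j _ ?_ (head?_replicate_cons z s T) ?_
  · simp only [List.length_append, List.length_cons, List.length_replicate]
    omega
  · rw [List.getLast?_append_of_ne_nil _ (by simp)]
    exact hl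

end Aux5

section Aux6

lemma nat_len_bound {lam w a r mm : ℝ} (hlam : lam < 0) {Pl c UL : ℕ}
    (hlen : Pl + c = UL + 1) (hP : (Pl : ℝ) ≤ mm) (hineq : w ≤ r + (c : ℝ) * lam)
    (hra : r ≤ a) : (UL : ℝ) ≤ (w - a) / lam + (mm - 1) := by
  have h1 : w - a ≤ (c : ℝ) * lam := by linarith
  have h2 : (c : ℝ) ≤ (w - a) / lam := (le_div_iff_of_neg hlam).2 h1
  have h3 : (UL : ℝ) + 1 = (Pl : ℝ) + (c : ℝ) := by exact_mod_cast hlen.symm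
  linarith

end Aux6
/-- the main theorem, entrywise form, with the explicit (coarser) bound
computed from `A^inf`. -/
theorem rank_one_transient_statement6 {n : ℕ}
    (𝒳 : Set (Fin (n + 2) → Fin (n + 2) → EReal))
    (Asup Ainf : Fin (n + 2) → Fin (n + 2) → EReal)
    (hstand : Standing 𝒳 Asup Ainf 0)
    (k : ℕ) (hk : 1 ≤ k)
    (A : ℕ → Fin (n + 2) → Fin (n + 2) → EReal)
    (hA : ∀ l, 1 ≤ l → l ≤ k → A l ∈ 𝒳)
    (hcyc : ∃ W, isCycle Asup W ∧ ∀ v ∈ W, v ≠ (0 : Fin (n + 2)))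
    (i j : Fin (n + 2))
    (a : ℝ) (ha : (a : EReal) = alphaE Asup 0 i)
    (b : ℝ) (hb : (b : EReal) = betaE Asup 0 j)
    -- `w_i` and `v_j`: optimal weights of walks of length at most `k` on `D_{A^inf}`
    (w : ℝ) (hw : (w : EReal) = wInf Ainf 0 k i)
    (v : ℝ) (hv : (v : EReal) = vInf Ainf 0 k j)
    -- the term involving `γ_{i,j}` is omitted from the maximum if `γ_{i,j} = -∞`
    (hk1 : ∀ g : ℝ, gammaE Asup 0 i j = (g : EReal) →
      (k : ℝ) > (w + v - g) / lamStar Asup 0 + ((n + 2 : ℝ) - 1))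
    (hk2 : (k : ℝ) > (w - a + v - b) / lamStar Asup 0 + 2 * ((n + 2 : ℝ) - 1)) :
    Gamma A k i j = Gamma A k i 0 + Gamma A k 0 j := by
  classical
  obtain ⟨hXne, hXnetop, hsupdef, hinfdef, hsupnetop, hinfnebot, hirr, hirrinf, hgeom,
    hXzz, hXcyc, hsupzz, hsupcyc⟩ := hstand
  -- basic entrywise comparisons
  have hAle : ∀ l a' b', 1 ≤ l → l ≤ k → A l a' b' ≤ Asup a' b' := by
    intro l a' b' h1 h2
    rw [hsupdef]
    exact le_biSup (fun X => X a' b') (hA l h1 h2)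
  have hAge : ∀ l a' b', 1 ≤ l → l ≤ k → Ainf a' b' ≤ A l a' b' := by
    intro l a' b' h1 h2
    rw [hinfdef]
    exact biInf_le (fun X => X a' b') (hA l h1 h2)
  have hA00 : ∀ l, 1 ≤ l → l ≤ k → A l (0 : Fin (n + 2)) 0 = 0 :=
    fun l h1 h2 => hXzz _ (hA l h1 h2)
  have hAnetop : ∀ l a' b', 1 ≤ l → l ≤ k → A l a' b' ≠ ⊤ :=
    fun l a' b' h1 h2 => hXnetop _ (hA l h1 h2) a' b'
  have hlam : lamStar Asup (0 : Fin (n + 2)) < 0 := lamStar_neg hsupnetop hsupcyc hcyc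
  have hcb := cycle_le_lamStar (z := (0 : Fin (n + 2))) hsupnetop hsupcyc
  -- w ≤ Gamma A k i 0
  have hwG1 : (w : EReal) ≤ Gamma A k i 0 := by
    rw [hw]
    refine sSup_le ?_
    rintro x ⟨W, hwalk, hlen, hh, hl, rfl⟩
    obtain ⟨Y, rfl⟩ := List.getLast?_eq_some_iff.1 hl
    have hYlen : Y.length ≤ k := by
      simp only [List.length_append, List.length_cons, List.length_nil] at hlen
      omega
    have hlow : wWeight Ainf (Y ++ [(0 : Fin (n + 2))]) ≤ tw A 0 (Y ++ [0]) :=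
      tw_ge_wWeight_inf hAge _ 0 (by
        simp only [Nat.zero_add, List.length_append, List.length_cons, List.length_nil]
        omega)
    exact hlow.trans (le_Gamma_pad_right hA00 i Y hYlen hh)
  -- v ≤ Gamma A k 0 j
  have hvG2 : (v : EReal) ≤ Gamma A k 0 j := by
    rw [hv]
    refine sSup_le ?_
    rintro x ⟨W, hwalk, hlen, hh, hl, rfl⟩
    obtain ⟨T, rfl⟩ : ∃ T, W = (0 : Fin (n + 2)) :: T := by
      cases W with
      | nil => simp at hh
      | cons a' t =>
          simp only [List.head?_cons, Option.some_inj] at hh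
          exact ⟨t, by rw [hh]⟩
    have hTlen : T.length ≤ k := by
      simp only [List.length_cons] at hlen
      omega
    have hlow : wWeight Ainf ((0 : Fin (n + 2)) :: T) ≤ tw A (k - T.length) (0 :: T) :=
      tw_ge_wWeight_inf hAge _ _ (by simp only [List.length_cons]; omega)
    exact hlow.trans (le_Gamma_pad_left hA00 j T (k - T.length) (by omega) hl)
  -- Gamma entries are finite
  have hGnetop : ∀ i' j' : Fin (n + 2), Gamma A k i' j' ≠ ⊤ := by
    intro i' j'
    obtain ⟨W, hlen, hh, hl, hwq⟩ := Gamma_attained (M := A) k hk i' j'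
    rw [← hwq]
    exact tw_ne_top W 0 (fun l x y hl1 hl2 => hAnetop l x y (by omega) (by omega))
  have hG1nebot : Gamma A k i 0 ≠ ⊥ := fun h => by
    rw [h, le_bot_iff] at hwG1
    exact EReal.coe_ne_bot w hwG1
  have hG2nebot : Gamma A k 0 j ≠ ⊥ := fun h => by
    rw [h, le_bot_iff] at hvG2
    exact EReal.coe_ne_bot v hvG2
  obtain ⟨g1, hG1⟩ : ∃ g1 : ℝ, Gamma A k i 0 = (g1 : EReal) :=
    ⟨(Gamma A k i 0).toReal, (EReal.coe_toReal (hGnetop i 0) hG1nebot).symm⟩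
  obtain ⟨g2, hG2⟩ : ∃ g2 : ℝ, Gamma A k 0 j = (g2 : EReal) :=
    ⟨(Gamma A k 0 j).toReal, (EReal.coe_toReal (hGnetop 0 j) hG2nebot).symm⟩
  have hwg1 : w ≤ g1 := by rw [hG1] at hwG1; exact_mod_cast hwG1
  have hvg2 : v ≤ g2 := by rw [hG2] at hvG2; exact_mod_cast hvG2
  ---------------------------------------------------------------
  -- analysis of an optimal walk for `Gamma A k i 0`
  obtain ⟨W1, hW1len, hW1h, hW1l, hW1w⟩ := Gamma_attained (M := A) k hk i 0
  have hW1ne : W1 ≠ [] := by intro h; rw [h] at hW1len; simp at hW1len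
  have htw1 : twalk A 0 W1 :=
    twalk_of_tw_ne_bot W1 0 hW1ne (by rw [hW1w, hG1]; exact EReal.coe_ne_bot g1)
  have hzW1 : (0 : Fin (n + 2)) ∈ W1 := by
    obtain ⟨Y, hY⟩ := List.getLast?_eq_some_iff.1 hW1l
    rw [hY]; simp
  obtain ⟨U, V, hUV, hzU⟩ := first_split hzW1
  have hUVlen : U.length + V.length + 1 = k + 1 := by
    rw [hUV] at hW1len
    simp only [List.length_append, List.length_cons] at hW1len
    omega
  have hsplit1 : tw A 0 W1 = tw A 0 (U ++ [0]) + tw A U.length ((0 : Fin (n + 2)) :: V) := by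
    rw [hUV]
    have h := tw_append_cons (M := A) U 0 V 0
    rwa [Nat.zero_add] at h
  have hVlast : ((0 : Fin (n + 2)) :: V).getLast? = some 0 := by
    rw [← List.getLast?_append_of_ne_nil U (l₂ := (0 : Fin (n + 2)) :: V) (by simp), ← hUV]
    exact hW1l
  have hclosedV : tw A U.length ((0 : Fin (n + 2)) :: V) ≤ 0 :=
    trellis_closed_le hAle hsupzz hsupcyc _ U.length (by simp) (by rw [hVlast]; rfl)
      (by simp only [List.length_cons]; omega)
  have hI1 : (g1 : EReal) ≤ tw A 0 (U ++ [0]) := by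
    calc (g1 : EReal) = tw A 0 W1 := by rw [hW1w, hG1]
      _ = tw A 0 (U ++ [0]) + tw A U.length ((0 : Fin (n + 2)) :: V) := hsplit1
      _ ≤ tw A 0 (U ++ [0]) + 0 := add_le_add_right hclosedV _
      _ = tw A 0 (U ++ [0]) := add_zero _
  have htwI1 : twalk A 0 (U ++ [(0 : Fin (n + 2))]) := by
    have h := (twalk_append_cons U 0 V 0).1 (by rw [← hUV]; exact htw1)
    exact h.1
  have hwalkI1 : isWalk Asup (U ++ [(0 : Fin (n + 2))]) :=
    isWalk_sup_of_twalk hAle _ 0 (by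
      simp only [Nat.zero_add, List.length_append, List.length_cons, List.length_nil]
      omega) htwI1
  have hI1head : (U ++ [(0 : Fin (n + 2))]).head? = some i := by
    rw [head?_append_cons U 0 [] V, ← hUV]
    exact hW1h
  obtain ⟨P, c, hPpath, hPh, hPl, hPmem, hPlen, hPw⟩ :=
    extract (lamStar Asup 0) hcb (U ++ [0]).length (U ++ [0]) le_rfl (by simp)
      (by
        intro x hd _
        rw [List.dropLast_concat] at hd
        exact fun h => hzU (h ▸ hd)) hwalkI1
  obtain ⟨rP, hrP0⟩ := tw_real P 0 hPpath.1 (fun l x y _ _ => hsupnetop x y)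
  have hrP : wWeight Asup P = (rP : EReal) := hrP0
  have hrPa : rP ≤ a := by
    have hmem : (rP : EReal) ∈ {x : EReal | ∃ W', isPath Asup W' ∧ W'.head? = some i ∧
        W'.getLast? = some 0 ∧ x = wWeight Asup W'} :=
      ⟨P, hPpath, hPh.trans hI1head, hPl.trans List.getLast?_concat, hrP.symm⟩
    have h := le_sSup hmem
    rw [show sSup {x : EReal | ∃ W', isPath Asup W' ∧ W'.head? = some i ∧
        W'.getLast? = some 0 ∧ x = wWeight Asup W'} = alphaE Asup 0 i from rfl, ← ha] at h
    exact_mod_cast h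
  have hg1le : g1 ≤ rP + (c : ℝ) * lamStar Asup 0 := by
    have h : (g1 : EReal) ≤ ((rP + (c : ℝ) * lamStar Asup 0 : ℝ) : EReal) := by
      refine hI1.trans ((tw_le_wWeight_sup hAle _ 0 (by
        simp only [Nat.zero_add, List.length_append, List.length_cons, List.length_nil]
        omega)).trans ?_)
      refine hPw.trans (le_of_eq ?_)
      rw [hrP, ← EReal.coe_add]
    exact_mod_cast h
  have hPcard : P.length ≤ n + 2 := by
    have h := hPpath.2.length_le_card
    simpa using h
  have hPlen' : P.length + c = U.length + 1 := by
    simpa using hPlen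
  have hp_bound : (U.length : ℝ) ≤ (w - a) / lamStar Asup 0 + ((n : ℝ) + 2 - 1) :=
    nat_len_bound hlam hPlen' (by exact_mod_cast hPcard)
      (by linarith) hrPa
  ---------------------------------------------------------------
  -- analysis of an optimal walk for `Gamma A k 0 j`
  obtain ⟨W2, hW2len, hW2h, hW2l, hW2w⟩ := Gamma_attained (M := A) k hk 0 j
  have hW2ne : W2 ≠ [] := by intro h; rw [h] at hW2len; simp at hW2len
  have htw2 : twalk A 0 W2 :=
    twalk_of_tw_ne_bot W2 0 hW2ne (by rw [hW2w, hG2]; exact EReal.coe_ne_bot g2)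
  obtain ⟨T, rfl⟩ : ∃ T, W2 = (0 : Fin (n + 2)) :: T := by
    cases W2 with
    | nil => exact absurd rfl hW2ne
    | cons a' t =>
        simp only [List.head?_cons, Option.some_inj] at hW2h
        exact ⟨t, by rw [hW2h]⟩
  obtain ⟨B, C0, hBC, hzC⟩ := last_split (show (0 : Fin (n + 2)) ∈ 0 :: T by simp)
  have hBClen : B.length + C0.length + 1 = k + 1 := by
    rw [hBC] at hW2len
    simp only [List.length_append, List.length_cons] at hW2len ⊢
    omega
  have hsplit2 : tw A 0 ((0 : Fin (n + 2)) :: T)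
      = tw A 0 (B ++ [0]) + tw A B.length ((0 : Fin (n + 2)) :: C0) := by
    rw [hBC]
    have h := tw_append_cons (M := A) B 0 C0 0
    rwa [Nat.zero_add] at h
  have hBhead : (B ++ [(0 : Fin (n + 2))]).head? = some 0 := by
    rw [head?_append_cons B 0 [] C0, ← hBC]
    rfl
  have hclosedB : tw A 0 (B ++ [(0 : Fin (n + 2))]) ≤ 0 :=
    trellis_closed_le hAle hsupzz hsupcyc _ 0 (by simp)
      (by rw [hBhead, List.getLast?_concat])
      (by
        simp only [Nat.zero_add, List.length_append, List.length_cons, List.length_nil]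
        omega)
  have hF : (g2 : EReal) ≤ tw A B.length ((0 : Fin (n + 2)) :: C0) := by
    calc (g2 : EReal) = tw A 0 ((0 : Fin (n + 2)) :: T) := by rw [hW2w, hG2]
      _ = tw A 0 (B ++ [0]) + tw A B.length ((0 : Fin (n + 2)) :: C0) := hsplit2
      _ ≤ 0 + tw A B.length ((0 : Fin (n + 2)) :: C0) := add_le_add_left hclosedB _
      _ = tw A B.length ((0 : Fin (n + 2)) :: C0) := zero_add _
  have htwF : twalk A B.length ((0 : Fin (n + 2)) :: C0) := by
    have h := (twalk_append_cons B 0 C0 0).1 (by rw [← hBC]; exact htw2)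
    have h2 := h.2
    rwa [Nat.zero_add] at h2
  have hwalkF : isWalk Asup ((0 : Fin (n + 2)) :: C0) :=
    isWalk_sup_of_twalk hAle _ B.length (by simp only [List.length_cons]; omega) htwF
  have hFlast : ((0 : Fin (n + 2)) :: C0).getLast? = some j := by
    rw [← List.getLast?_append_of_ne_nil B (l₂ := (0 : Fin (n + 2)) :: C0) (by simp), ← hBC]
    exact hW2l
  obtain ⟨P2, c2, hP2path, hP2h, hP2l, hP2mem, hP2len, hP2w⟩ :=
    extract (lamStar Asup 0) hcb ((0 : Fin (n + 2)) :: C0).length (0 :: C0) le_rfl (by simp)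
      (by
        intro x _ ht
        exact fun h => hzC (h ▸ ht)) hwalkF
  obtain ⟨rP2, hrP20⟩ := tw_real P2 0 hP2path.1 (fun l x y _ _ => hsupnetop x y)
  have hrP2 : wWeight Asup P2 = (rP2 : EReal) := hrP20
  have hrP2b : rP2 ≤ b := by
    have hmem : (rP2 : EReal) ∈ {x : EReal | ∃ W', isPath Asup W' ∧ W'.head? = some 0 ∧
        W'.getLast? = some j ∧ x = wWeight Asup W'} :=
      ⟨P2, hP2path, hP2h, hP2l.trans hFlast, hrP2.symm⟩
    have h := le_sSup hmem
    rw [show sSup {x : EReal | ∃ W', isPath Asup W' ∧ W'.head? = some 0 ∧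
        W'.getLast? = some j ∧ x = wWeight Asup W'} = betaE Asup 0 j from rfl, ← hb] at h
    exact_mod_cast h
  have hg2le : g2 ≤ rP2 + (c2 : ℝ) * lamStar Asup 0 := by
    have h : (g2 : EReal) ≤ ((rP2 + (c2 : ℝ) * lamStar Asup 0 : ℝ) : EReal) := by
      refine hF.trans ((tw_le_wWeight_sup hAle _ B.length
        (by simp only [List.length_cons]; omega)).trans ?_)
      refine hP2w.trans (le_of_eq ?_)
      rw [hrP2, ← EReal.coe_add]
    exact_mod_cast h
  have hP2card : P2.length ≤ n + 2 := by
    have h := hP2path.2.length_le_card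
    simpa using h
  have hP2len' : P2.length + c2 = C0.length + 1 := by
    simpa using hP2len
  have hq_bound : (C0.length : ℝ) ≤ (v - b) / lamStar Asup 0 + ((n : ℝ) + 2 - 1) :=
    nat_len_bound hlam hP2len' (by exact_mod_cast hP2card)
      (by linarith) hrP2b
  ---------------------------------------------------------------
  -- LOWER BOUND : Gamma A k i 0 + Gamma A k 0 j ≤ Gamma A k i j
  have hpq : U.length + C0.length < k := by
    have hreal : (U.length : ℝ) + (C0.length : ℝ) < (k : ℝ) := by
      have hdiv : (w - a) / lamStar Asup 0 + (v - b) / lamStar Asup 0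
          = (w - a + v - b) / lamStar Asup 0 := by
        rw [← add_div]
        ring_nf
      push_cast at hk2 ⊢
      linarith [hp_bound, hq_bound]
    exact_mod_cast hreal
  have hdpos : U.length ≤ k - C0.length := by omega
  have hstar_w : tw A 0 (U ++ (0 : Fin (n + 2)) :: (List.replicate (k - C0.length - U.length) 0 ++ C0))
      = tw A 0 (U ++ [0]) + tw A (k - C0.length) ((0 : Fin (n + 2)) :: C0) := by
    have e1 := tw_append_cons (M := A) U 0 (List.replicate (k - C0.length - U.length) 0 ++ C0) 0
    rw [Nat.zero_add] at e1
    rw [e1]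
    congr 1
    rw [cons_replicate_append,
      tw_pad 0 (k - C0.length - U.length) U.length C0
        (fun l hl1 hl2 => hA00 l (by omega) (by omega))]
    congr 1
    omega
  have hlower : Gamma A k i 0 + Gamma A k 0 j ≤ Gamma A k i j := by
    rw [hG1, hG2]
    have hBL : B.length = k - C0.length := by omega
    have h1 : (g1 : EReal) + (g2 : EReal)
        ≤ tw A 0 (U ++ (0 : Fin (n + 2)) :: (List.replicate (k - C0.length - U.length) 0 ++ C0)) := by
      rw [hstar_w]
      exact add_le_add hI1 (by rw [← hBL]; exact hF)
    refine h1.trans (tw_le_Gamma k i j _ ?_ ?_ ?_)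
    · simp only [List.length_append, List.length_cons, List.length_replicate]
      omega
    · rw [head?_append_cons U 0 (List.replicate (k - C0.length - U.length) 0 ++ C0) V, ← hUV]
      exact hW1h
    · rw [List.getLast?_append_of_ne_nil U (by simp), cons_replicate_append,
        List.getLast?_append_of_ne_nil _ (by simp)]
      exact hFlast
  ---------------------------------------------------------------
  -- UPPER BOUND
  obtain ⟨W, hWlen, hWh, hWl, hWw⟩ := Gamma_attained (M := A) k hk i j
  have hWne : W ≠ [] := by intro h; rw [h] at hWlen; simp at hWlen
  have hGnebot : Gamma A k i j ≠ ⊥ := by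
    intro h
    rw [h, le_bot_iff] at hlower
    rcases EReal.add_eq_bot_iff.1 hlower with h' | h'
    · exact hG1nebot h'
    · exact hG2nebot h'
  obtain ⟨gr, hGr⟩ : ∃ gr : ℝ, Gamma A k i j = (gr : EReal) :=
    ⟨(Gamma A k i j).toReal, (EReal.coe_toReal (hGnetop i j) hGnebot).symm⟩
  have htwW : twalk A 0 W :=
    twalk_of_tw_ne_bot W 0 hWne (by rw [hWw]; exact hGnebot)
  have hupper : Gamma A k i j ≤ Gamma A k i 0 + Gamma A k 0 j := by
    by_cases hzmem : (0 : Fin (n + 2)) ∈ W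
    · -- the walk passes through the node 0
      obtain ⟨U', V', hUV', hzU'⟩ := first_split hzmem
      have hUVlen' : U'.length + V'.length + 1 = k + 1 := by
        rw [hUV'] at hWlen
        simp only [List.length_append, List.length_cons] at hWlen
        omega
      obtain ⟨B', C', hBC', hzC'⟩ := last_split (show (0 : Fin (n + 2)) ∈ 0 :: V' by simp)
      have hBClen' : B'.length + C'.length + 1 = V'.length + 1 := by
        have := congrArg List.length hBC'
        simp only [List.length_append, List.length_cons] at this
        omega
      have e0 : tw A 0 W = tw A 0 (U' ++ [0]) + tw A U'.length ((0 : Fin (n + 2)) :: V') := by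
        rw [hUV']
        have h := tw_append_cons (M := A) U' 0 V' 0
        rwa [Nat.zero_add] at h
      have e1 : tw A U'.length ((0 : Fin (n + 2)) :: V')
          = tw A U'.length (B' ++ [0])
            + tw A (U'.length + B'.length) ((0 : Fin (n + 2)) :: C') := by
        rw [hBC']
        exact tw_append_cons B' 0 C' U'.length
      have hmidhead : (B' ++ [(0 : Fin (n + 2))]).head? = some 0 := by
        rw [head?_append_cons B' 0 [] C', ← hBC']
        rfl
      have hmid : tw A U'.length (B' ++ [(0 : Fin (n + 2))]) ≤ 0 :=
        trellis_closed_le hAle hsupzz hsupcyc _ U'.length (by simp)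
          (by rw [hmidhead, List.getLast?_concat])
          (by
            simp only [List.length_append, List.length_cons, List.length_nil]
            omega)
      have hWlast' : ((0 : Fin (n + 2)) :: C').getLast? = some j := by
        rw [← List.getLast?_append_of_ne_nil B' (l₂ := (0 : Fin (n + 2)) :: C') (by simp),
          ← hBC', ← List.getLast?_append_of_ne_nil U' (l₂ := (0 : Fin (n + 2)) :: V') (by simp),
          ← hUV']
        exact hWl
      have hp1 : tw A 0 (U' ++ [(0 : Fin (n + 2))]) ≤ Gamma A k i 0 :=
        le_Gamma_pad_right hA00 i U' (by omega)
          (by rw [head?_append_cons U' 0 [] V', ← hUV']; exact hWh)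
      have hp3 : tw A (U'.length + B'.length) ((0 : Fin (n + 2)) :: C') ≤ Gamma A k 0 j :=
        le_Gamma_pad_left hA00 j C' (U'.length + B'.length) (by omega) hWlast'
      calc Gamma A k i j = tw A 0 W := hWw.symm
        _ = tw A 0 (U' ++ [0]) + (tw A U'.length (B' ++ [0])
            + tw A (U'.length + B'.length) ((0 : Fin (n + 2)) :: C')) := by rw [e0, e1]
        _ ≤ tw A 0 (U' ++ [0]) + (0 + tw A (U'.length + B'.length) ((0 : Fin (n + 2)) :: C')) :=
            add_le_add_right (add_le_add_left hmid _) _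
        _ = tw A 0 (U' ++ [0]) + tw A (U'.length + B'.length) ((0 : Fin (n + 2)) :: C') := by
            rw [zero_add]
        _ ≤ Gamma A k i 0 + Gamma A k 0 j := add_le_add hp1 hp3
    · -- the walk avoids the node 0 : contradiction with the bound on k
      exfalso
      have hwalkW : isWalk Asup W :=
        isWalk_sup_of_twalk hAle _ 0 (by omega) htwW
      obtain ⟨P3, c3, hP3path, hP3h, hP3l, hP3mem, hP3len, hP3w⟩ :=
        extract (lamStar Asup 0) hcb W.length W le_rfl hWne
          (by
            intro x hd _
            exact fun h => hzmem (h ▸ (List.dropLast_subset W hd))) hwalkW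
      obtain ⟨rP3, hrP30⟩ := tw_real P3 0 hP3path.1 (fun l x y _ _ => hsupnetop x y)
      have hrP3 : wWeight Asup P3 = (rP3 : EReal) := hrP30
      set S : Set EReal := {x : EReal | ∃ W', isPath Asup W' ∧ W'.head? = some i ∧
        W'.getLast? = some j ∧ (∀ u ∈ W', u ≠ (0 : Fin (n + 2))) ∧ x = wWeight Asup W'}
        with hSdef
      have hmemS : (rP3 : EReal) ∈ S :=
        ⟨P3, hP3path, hP3h.trans hWh, hP3l.trans hWl,
          fun u hu h => hzmem (h ▸ hP3mem u hu), hrP3.symm⟩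
      have hSfin : S.Finite := by
        apply Set.Finite.subset (Set.Finite.image (fun W' => wWeight Asup W')
          (List.finite_length_le (Fin (n + 2)) (n + 2)))
        rintro x ⟨W', hp, _, _, _, rfl⟩
        exact ⟨W', by simpa using hp.2.length_le_card, rfl⟩
      have hSsup := Set.Nonempty.csSup_mem ⟨_, hmemS⟩ hSfin
      obtain ⟨Wg, hWgp, _, _, _, hWgw⟩ := hSsup
      obtain ⟨g, hgr0⟩ := tw_real Wg 0 hWgp.1 (fun l x y _ _ => hsupnetop x y)
      have hgamma : gammaE Asup 0 i j = (g : EReal) := by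
        rw [show gammaE Asup 0 i j = sSup S from rfl, hWgw]
        exact hgr0
      have hrP3g : rP3 ≤ g := by
        have h := le_sSup hmemS
        rw [hWgw] at h
        have h2 : wWeight Asup Wg = (g : EReal) := hgr0
        rw [h2] at h
        exact_mod_cast h
      have hk1' := hk1 g hgamma
      have hgrle : gr ≤ rP3 + (c3 : ℝ) * lamStar Asup 0 := by
        have h : (gr : EReal) ≤ ((rP3 + (c3 : ℝ) * lamStar Asup 0 : ℝ) : EReal) := by
          rw [← hGr, ← hWw]
          refine (tw_le_wWeight_sup hAle _ 0 (by omega)).trans ?_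
          refine hP3w.trans (le_of_eq ?_)
          rw [hrP3, ← EReal.coe_add]
        exact_mod_cast h
      have hP3card : P3.length ≤ n + 2 := by
        have h := hP3path.2.length_le_card
        simpa using h
      have hc3 : ((k : ℝ) - ((n : ℝ) + 1)) ≤ (c3 : ℝ) := by
        have h : (P3.length : ℝ) + (c3 : ℝ) = (k : ℝ) + 1 := by
          rw [hWlen] at hP3len
          exact_mod_cast hP3len
        have h2 : (P3.length : ℝ) ≤ (n : ℝ) + 2 := by exact_mod_cast hP3card
        linarith
      have hmul : (c3 : ℝ) * lamStar Asup 0 ≤ ((k : ℝ) - ((n : ℝ) + 1)) * lamStar Asup 0 :=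
        mul_le_mul_of_nonpos_right hc3 hlam.le
      have hklam : ((k : ℝ) - ((n : ℝ) + 1)) * lamStar Asup 0 < w + v - g := by
        have h1 : (w + v - g) / lamStar Asup 0 < (k : ℝ) - ((n : ℝ) + 1) := by
          push_cast at hk1'
          linarith
        have h2 := mul_lt_mul_of_neg_right h1 hlam
        rwa [div_mul_cancel₀ _ hlam.ne] at h2
      have hwvgr : w + v ≤ gr := by
        have h : ((w + v : ℝ) : EReal) ≤ (gr : EReal) := by
          rw [EReal.coe_add, ← hGr]
          exact (add_le_add hwG1 hvG2).trans hlower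
        exact_mod_cast h
      linarith
  exact le_antisymm hupper hlower

end MaxPlusTransient
end
end

section
/- Under the standing assumptions, every initial walk W₁ from i to 1 on the trellis digraph 𝒯_{Γ(k)} satisfies p_𝒯(W₁) ≤ α_i + (l(W₁) − (n − 1))·λ*. -/
/-
Common framework for "A bound for the rank-one transient of inhomogeneous matrix
products in special case" (Kennedy-Cochran-Patrick, Sergeev, Berežný).

We work over the max-plus semiring, modelled inside `EReal` (so `⊥ = -∞` is the
max-plus zero and ordinary addition is the max-plus multiplication).  Matrices are
functions `Fin m → Fin m → EReal`.  The distinguished node "1" of the paper is the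
node `0 : Fin (n+2)` (so that `n + 2 ≥ 2` plays the role of the paper's `n ≥ 2`).

A walk is a nonempty list of nodes.  Walks on the trellis digraph of the product
`A 1 ⊗ ⋯ ⊗ A k` additionally record the level at which they start: the arc from the
`(l-1)`-st to the `l`-th node of a walk starting at level `s` has weight given by the
matrix `A (s + l)`.
-/

open scoped Classical

noncomputable section

namespace MaxPlusTransient

variable {m : ℕ}

/-! ### Auxiliary lemmas -/

lemma tw_const_level (A : Fin m → Fin m → EReal) :
    ∀ (W : List (Fin m)) (s t : ℕ), tw (fun _ => A) s W = tw (fun _ => A) t W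
  | [], _, _ => rfl
  | [_], _, _ => rfl
  | a :: b :: l, s, t => by
      simp only [tw]
      rw [tw_const_level A (b :: l) (s + 1) (t + 1)]

lemma twalk_const_level (A : Fin m → Fin m → EReal) :
    ∀ (W : List (Fin m)) (s t : ℕ), twalk (fun _ => A) s W ↔ twalk (fun _ => A) t W
  | [], _, _ => Iff.rfl
  | [_], _, _ => Iff.rfl
  | a :: b :: l, s, t => by
      simp only [twalk]
      rw [twalk_const_level A (b :: l) (s + 1) (t + 1)]

lemma wWeight_nil (A : Fin m → Fin m → EReal) : wWeight A [] = 0 := rfl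

lemma wWeight_single (A : Fin m → Fin m → EReal) (a : Fin m) : wWeight A [a] = 0 := rfl

lemma wWeight_cons_cons (A : Fin m → Fin m → EReal) (a b : Fin m) (t : List (Fin m)) :
    wWeight A (a :: b :: t) = A a b + wWeight A (b :: t) := by
  simp only [wWeight, tw]
  rw [tw_const_level A (b :: t) 1 0]

lemma isWalk_cons_cons (A : Fin m → Fin m → EReal) (a b : Fin m) (t : List (Fin m)) :
    isWalk A (a :: b :: t) ↔ A a b ≠ ⊥ ∧ isWalk A (b :: t) := by
  simp only [isWalk, twalk]
  rw [twalk_const_level A (b :: t) 1 0]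

lemma wWeight_append (A : Fin m → Fin m → EReal) :
    ∀ (P : List (Fin m)) (x : Fin m) (M : List (Fin m)),
      wWeight A (P ++ x :: M) = wWeight A (P ++ [x]) + wWeight A (x :: M)
  | [], x, M => by simp [wWeight_single, zero_add]
  | [a], x, M => by
      simp only [List.cons_append, List.nil_append]
      rw [wWeight_cons_cons, wWeight_cons_cons, wWeight_single, add_zero]
  | a :: b :: P, x, M => by
      simp only [List.cons_append]
      rw [wWeight_cons_cons, wWeight_cons_cons]
      have := wWeight_append A (b :: P) x M
      simp only [List.cons_append] at this
      rw [this, add_assoc]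

lemma isWalk_append (A : Fin m → Fin m → EReal) :
    ∀ (P : List (Fin m)) (x : Fin m) (M : List (Fin m)),
      isWalk A (P ++ x :: M) ↔ isWalk A (P ++ [x]) ∧ isWalk A (x :: M)
  | [], x, M => by
      simp only [List.nil_append]
      constructor
      · intro h; exact ⟨trivial, h⟩
      · rintro ⟨-, h⟩; exact h
  | [a], x, M => by
      simp only [List.cons_append, List.nil_append]
      rw [isWalk_cons_cons, isWalk_cons_cons]
      constructor
      · rintro ⟨h1, h2⟩; exact ⟨⟨h1, trivial⟩, h2⟩
      · rintro ⟨⟨h1, -⟩, h2⟩; exact ⟨h1, h2⟩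
  | a :: b :: P, x, M => by
      simp only [List.cons_append]
      rw [isWalk_cons_cons, isWalk_cons_cons]
      have := isWalk_append A (b :: P) x M
      simp only [List.cons_append] at this
      rw [this, and_assoc]

lemma exists_real_coe {x : EReal} (h1 : x ≠ ⊥) (h2 : x ≠ ⊤) : ∃ r : ℝ, x = (r : EReal) := by
  induction x using EReal.rec with
  | bot => exact absurd rfl h1
  | coe q => exact ⟨q, rfl⟩
  | top => exact absurd rfl h2

lemma wWeight_real (A : Fin m → Fin m → EReal) (hT : ∀ i j, A i j ≠ ⊤) :
    ∀ W, isWalk A W → ∃ r : ℝ, wWeight A W = (r : EReal)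
  | [], _ => ⟨0, by simp [wWeight_nil]⟩
  | [a], _ => ⟨0, by simp [wWeight_single]⟩
  | a :: b :: t, hw => by
      rw [isWalk_cons_cons] at hw
      obtain ⟨r, hr⟩ := wWeight_real A hT (b :: t) hw.2
      have hne : A a b ≠ ⊥ := hw.1
      obtain ⟨p, hab⟩ := exists_real_coe hne (hT a b)
      exact ⟨p + r, by rw [wWeight_cons_cons, hab, hr, ← EReal.coe_add]⟩

lemma exists_dup_split {γ : Type*} :
    ∀ (l : List γ), ¬ l.Nodup → ∃ P x M S, l = P ++ x :: (M ++ x :: S)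
  | [], h => absurd List.nodup_nil h
  | a :: t, h => by
      rw [List.nodup_cons] at h
      push_neg at h
      by_cases hm : a ∈ t
      · obtain ⟨M, S, rfl⟩ := List.append_of_mem hm
        exact ⟨[], a, M, S, rfl⟩
      · obtain ⟨P, x, M, S, rfl⟩ := exists_dup_split t (h hm)
        exact ⟨a :: P, x, M, S, rfl⟩

lemma tw_le_tw (B : Fin m → Fin m → EReal) :
    ∀ (W : List (Fin m)) (s : ℕ) (M : ℕ → Fin m → Fin m → EReal),
      twalk M s W → (∀ l, s < l → l < s + W.length → ∀ i j, M l i j ≤ B i j) →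
      tw M s W ≤ tw (fun _ => B) s W ∧ twalk (fun _ => B) s W
  | [], _, _, h, _ => h.elim
  | [_], _, _, _, _ => ⟨le_refl _, trivial⟩
  | a :: b :: t, s, M, hw, hle => by
      obtain ⟨hab, ht⟩ := hw
      have h1 : M (s + 1) a b ≤ B a b := by
        refine hle (s + 1) (by omega) ?_ a b
        simp only [List.length_cons]; omega
      obtain ⟨ih1, ih2⟩ := tw_le_tw B (b :: t) (s + 1) M ht (fun l hl1 hl2 => by
        refine hle l (by omega) ?_
        simp only [List.length_cons] at hl2 ⊢; omega)
      refine ⟨?_, ?_⟩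
      · simp only [tw]; exact add_le_add h1 ih1
      · exact ⟨ne_bot_of_le_ne_bot hab h1, ih2⟩

/-- The main inductive bound on walks of `D_{Asup}` from `i` to `one`
avoiding `one` before the end. -/
lemma key_bound (Asup : Fin m → Fin m → EReal) (one i : Fin m)
    (a lam : ℝ) (hlam0 : lam ≤ 0)
    (hpath : ∀ W, isPath Asup W → W.head? = some i → W.getLast? = some one →
      wWeight Asup W ≤ (a : EReal))
    (hcycle : ∀ C, isCycle Asup C → (∀ v ∈ C, v ≠ one) →
      ∃ r : ℝ, wWeight Asup C = (r : EReal) ∧ r ≤ ((C.length : ℝ) - 1) * lam) :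
    ∀ N W, W.length ≤ N → isWalk Asup W → W.head? = some i → W.getLast? = some one →
      (∀ v ∈ W.dropLast, v ≠ one) →
      wWeight Asup W ≤ ((a + (((W.length : ℝ) - 1) - ((m : ℝ) - 1)) * lam : ℝ) : EReal) := by
  intro N
  induction N with
  | zero =>
      intro W hlen hw hh _ _
      interval_cases h : W.length
      · rw [List.length_eq_zero_iff] at h; subst h; simp at hh
  | succ N ih =>
      intro W hlen hw hh hl hd
      by_cases hnd : W.Nodup
      · -- path case
        have hb : wWeight Asup W ≤ (a : EReal) := hpath W ⟨hw, hnd⟩ hh hl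
        refine hb.trans ?_
        rw [EReal.coe_le_coe_iff]
        have hcard : W.length ≤ m := by
          have := List.Nodup.length_le_card hnd
          simpa using this
        have hcard' : (W.length : ℝ) ≤ m := by exact_mod_cast hcard
        nlinarith
      · obtain ⟨P, x, M, S, rfl⟩ := exists_dup_split _ hnd
        -- S is nonempty
        rcases List.eq_nil_or_concat S with rfl | ⟨S', z, hS⟩
        · exfalso
          have hW : P ++ x :: (M ++ x :: ([] : List (Fin m))) = (P ++ x :: M) ++ [x] := by
            simp
          rw [hW] at hl hd
          rw [List.getLast?_concat] at hl
          have hx1 : x = one := by injection hl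
          have hxd : x ∈ ((P ++ x :: M) ++ [x]).dropLast := by
            rw [List.dropLast_concat]; simp
          exact hd x hxd hx1
        rw [List.concat_eq_append] at hS
        subst hS
        -- set-up
        set W := P ++ x :: (M ++ x :: (S' ++ [z])) with hWdef
        have hWc : W = (P ++ x :: (M ++ x :: S')) ++ [z] := by simp [hWdef]
        have hz : z = one := by
          rw [hWc, List.getLast?_concat] at hl; injection hl
        have hdrop : W.dropLast = P ++ x :: (M ++ x :: S') := by
          rw [hWc, List.dropLast_concat]
        set W' : List (Fin m) := P ++ x :: (S' ++ [z]) with hW'def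
        set C : List (Fin m) := x :: (M ++ [x]) with hCdef
        -- walk decompositions
        have hwW : isWalk Asup (P ++ [x]) ∧ isWalk Asup (x :: (M ++ x :: (S' ++ [z]))) := by
          rw [← isWalk_append]; exact hw
        have hwC' : isWalk Asup ((x :: M) ++ [x]) ∧ isWalk Asup (x :: (S' ++ [z])) := by
          rw [← isWalk_append]
          simpa using hwW.2
        have hwW' : isWalk Asup W' := by
          rw [hW'def, isWalk_append]; exact ⟨hwW.1, hwC'.2⟩
        have hwC : isWalk Asup C := by simpa [hCdef] using hwC'.1
        -- weight decomposition
        have hsplit : wWeight Asup W = wWeight Asup W' + wWeight Asup C := by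
          rw [hWdef, hW'def, hCdef, wWeight_append Asup P x (M ++ x :: (S' ++ [z])),
            wWeight_append Asup P x (S' ++ [z])]
          have h2 : wWeight Asup (x :: (M ++ x :: (S' ++ [z])))
              = wWeight Asup (x :: (M ++ [x])) + wWeight Asup (x :: (S' ++ [z])) := by
            have := wWeight_append Asup (x :: M) x (S' ++ [z])
            simpa using this
          rw [h2]
          abel
        -- C is a cycle avoiding one
        have hCmem : ∀ v ∈ C, v ∈ W.dropLast := by
          intro v hv
          rw [hdrop]
          rw [hCdef] at hv
          simp only [List.mem_cons, List.mem_append, List.mem_singleton,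
            List.not_mem_nil, or_false] at hv
          simp only [List.mem_append, List.mem_cons]
          tauto
        have hCavoid : ∀ v ∈ C, v ≠ one := fun v hv => hd v (hCmem v hv)
        have hCcyc : isCycle Asup C := by
          refine ⟨hwC, ?_, ?_⟩
          · rw [hCdef]; simp
          · rw [hCdef]
            have : (x :: (M ++ [x])).getLast? = ((x :: M) ++ [x]).getLast? := by simp
            rw [this, List.getLast?_concat]; rfl
        obtain ⟨r, hrw, hrle⟩ := hcycle C hCcyc hCavoid
        -- properties of W'
        have hhW' : W'.head? = some i := by
          rw [hWdef] at hh
          rw [hW'def]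
          cases P with
          | nil => simpa using hh
          | cons p Ps => simpa using hh
        have hlW' : W'.getLast? = some one := by
          have : W' = (P ++ x :: S') ++ [z] := by simp [hW'def]
          rw [this, List.getLast?_concat, hz]
        have hdW' : ∀ v ∈ W'.dropLast, v ≠ one := by
          intro v hv
          apply hd
          rw [hdrop]
          have hd' : W'.dropLast = P ++ x :: S' := by
            have : W' = (P ++ x :: S') ++ [z] := by simp [hW'def]
            rw [this, List.dropLast_concat]
          rw [hd'] at hv
          simp only [List.mem_append, List.mem_cons] at hv ⊢
          tauto
        -- lengths
        have hlenW : W.length = W'.length + (M.length + 1) := by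
          rw [hWdef, hW'def]; simp; omega
        have hlenC : C.length = M.length + 2 := by rw [hCdef]; simp
        have hlenW' : W'.length ≤ N := by
          rw [hlenW] at hlen; omega
        have ihW' := ih W' hlenW' hwW' hhW' hlW' hdW'
        -- combine
        rw [hsplit, hrw]
        calc wWeight Asup W' + (r : EReal)
            ≤ ((a + (((W'.length : ℝ) - 1) - ((m : ℝ) - 1)) * lam : ℝ) : EReal)
              + ((((C.length : ℝ) - 1) * lam : ℝ) : EReal) :=
              add_le_add ihW' (by exact_mod_cast hrle)
          _ = ((a + (((W.length : ℝ) - 1) - ((m : ℝ) - 1)) * lam : ℝ) : EReal) := by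
              rw [← EReal.coe_add, EReal.coe_eq_coe_iff]
              have e1 : (W.length : ℝ) = (W'.length : ℝ) + ((M.length : ℝ) + 1) := by
                exact_mod_cast hlenW
              have e2 : (C.length : ℝ) = (M.length : ℝ) + 2 := by exact_mod_cast hlenC
              rw [e1, e2]; ring

/-- weight bound for initial walks. -/
theorem rank_one_transient_statement9 {n : ℕ}
    (𝒳 : Set (Fin (n + 2) → Fin (n + 2) → EReal))
    (Asup Ainf : Fin (n + 2) → Fin (n + 2) → EReal)
    (hstand : Standing 𝒳 Asup Ainf 0)
    (k : ℕ) (hk : 1 ≤ k)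
    (A : ℕ → Fin (n + 2) → Fin (n + 2) → EReal)
    (hA : ∀ l, 1 ≤ l → l ≤ k → A l ∈ 𝒳)
    (hcyc : ∃ W, isCycle Asup W ∧ ∀ v ∈ W, v ≠ (0 : Fin (n + 2)))
    (i : Fin (n + 2))
    (a : ℝ) (ha : (a : EReal) = alphaE Asup 0 i) :
    ∀ W₁, isInitialWalk A 0 k i W₁ →
      tw A 0 W₁ ≤
        ((a + (((W₁.length : ℝ) - 1) - ((n + 2 : ℝ) - 1)) * lamStar Asup 0 : ℝ) : EReal) := by
  obtain ⟨-, -, hsup, -, hsuptop, -, -, -, -, -, -, -, hsupneg⟩ := hstand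
  intro W₁ hIW
  obtain ⟨htw, hlk, hhead, hlast, hdrop⟩ := hIW
  -- W₁ is nonempty
  have hne : W₁ ≠ [] := by intro h; rw [h] at hhead; simp at hhead
  have hpos : 1 ≤ W₁.length := List.length_pos_iff.mpr hne
  -- compare with the walk on Asup
  have hXle : ∀ X ∈ 𝒳, ∀ i j, X i j ≤ Asup i j := by
    intro X hX i j
    rw [hsup i j]
    exact le_iSup₂ (f := fun Y _ => Y i j) X hX
  obtain ⟨hle, hwalk⟩ := tw_le_tw Asup W₁ 0 A htw (by
    intro l hl1 hl2 i j
    exact hXle (A l) (hA l hl1 (by omega)) i j)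
  have hwalk' : isWalk Asup W₁ := hwalk
  have hle' : tw A 0 W₁ ≤ wWeight Asup W₁ := hle
  refine hle'.trans ?_
  -- facts about lamStar
  set lam := lamStar Asup 0 with hlamdef
  have hub : ∀ x ∈ lamSet Asup 0, x ≤ 0 := by
    rintro x ⟨W, hC, h0, r, hwr, rfl⟩
    have hlen2 : 2 ≤ W.length := hC.2.1
    have hvex : ∃ v ∈ W, v ≠ (0 : Fin (n+2)) := by
      cases W with
      | nil => simp at hlen2
      | cons w t => exact ⟨w, List.mem_cons_self, h0 w List.mem_cons_self⟩
    have hneg : wWeight Asup W < 0 := hsupneg W hC hvex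
    rw [hwr] at hneg
    have hr0 : r < 0 := by exact_mod_cast hneg
    have hdpos : (0 : ℝ) < (W.length : ℝ) - 1 := by
      have : (2 : ℝ) ≤ (W.length : ℝ) := by exact_mod_cast hlen2
      linarith
    exact le_of_lt (div_neg_of_neg_of_pos hr0 hdpos)
  have hLne : (lamSet Asup 0).Nonempty := by
    obtain ⟨W0, hC0, hav0⟩ := hcyc
    obtain ⟨r0, hr0⟩ := wWeight_real Asup hsuptop W0 hC0.1
    exact ⟨r0 / ((W0.length : ℝ) - 1), W0, hC0, hav0, r0, hr0, rfl⟩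
  have hlam0 : lam ≤ 0 := csSup_le hLne hub
  have hbdd : BddAbove (lamSet Asup 0) := ⟨0, hub⟩
  -- the cycle bound
  have hcycle : ∀ C, isCycle Asup C → (∀ v ∈ C, v ≠ (0 : Fin (n+2))) →
      ∃ r : ℝ, wWeight Asup C = (r : EReal) ∧ r ≤ ((C.length : ℝ) - 1) * lam := by
    intro C hC hav
    obtain ⟨r, hr⟩ := wWeight_real Asup hsuptop C hC.1
    refine ⟨r, hr, ?_⟩
    have hmem : r / ((C.length : ℝ) - 1) ∈ lamSet Asup 0 := ⟨C, hC, hav, r, hr, rfl⟩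
    have hlem : r / ((C.length : ℝ) - 1) ≤ lam := le_csSup hbdd hmem
    have hdpos : (0 : ℝ) < (C.length : ℝ) - 1 := by
      have : (2 : ℝ) ≤ (C.length : ℝ) := by exact_mod_cast hC.2.1
      linarith
    calc r = (r / ((C.length : ℝ) - 1)) * ((C.length : ℝ) - 1) := by
              field_simp
      _ ≤ lam * ((C.length : ℝ) - 1) := by
              exact mul_le_mul_of_nonneg_right hlem (le_of_lt hdpos)
      _ = ((C.length : ℝ) - 1) * lam := by ring
  -- the path bound
  have hpath : ∀ W, isPath Asup W → W.head? = some i → W.getLast? = some (0 : Fin (n+2)) →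
      wWeight Asup W ≤ (a : EReal) := by
    intro W hP hh hl
    rw [ha]
    exact le_sSup ⟨W, hP, hh, hl, rfl⟩
  have := key_bound Asup 0 i a lam hlam0 hpath hcycle W₁.length W₁ le_rfl hwalk' hhead
    hlast hdrop
  refine this.trans ?_
  rw [EReal.coe_le_coe_iff]
  have : ((n + 2 : ℕ) : ℝ) = (n : ℝ) + 2 := by push_cast; ring
  rw [this]

end MaxPlusTransient
end
end
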